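/- Let P ∈ MRPD(w), let pipe j be a removable pipe of P, and let pipe j' (j' ≠ j) be a non-removable pipe of P. Then pipe j' is also non-removable in Φ_j(P). -/

import Mathlib

open Polynomial

namespace GrothPS

/-- Filter a finset by an arbitrary (possibly non-decidable) predicate. -/
noncomputable def fselect {α : Type*} (p : α → Prop) (s : Finset α) : Finset α :=
  @Finset.filter α p (fun _ => Classical.propDecidable _) s

/-- Filter a list by an arbitrary (possibly non-decidable) predicate. -/
noncomputable def lselect {α : Type*} (p : α → Prop) (l : List α) : List α :=
  l.filter (fun a => @decide (p a) (Classical.propDecidable _))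

/-- `if`-term for an arbitrary proposition. -/
noncomputable def cIte {α : Sort*} (p : Prop) (a b : α) : α :=
  @ite α p (Classical.propDecidable p) a b

/-- The staircase shape of rank `n`: the set of (matrix-indexed) positions `(i,j)` with
`1 ≤ i`, `1 ≤ j` and `i + j ≤ n + 1`; row `i` consists of the `n + 1 - i` left-justified
tiles `(i,1),…,(i,n+1-i)`. -/
def staircase (n : ℕ) : Finset (ℕ × ℕ) :=
  (Finset.range (n + 2) ×ˢ Finset.range (n + 2)).filter
    (fun t => 1 ≤ t.1 ∧ 1 ≤ t.2 ∧ t.1 + t.2 ≤ n + 1)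

/-- One step in tracing a pipe through a pipe dream whose set of crossing tiles is `C`
(every other tile of the staircase being a bumping tile).  A state `((i,j),d)` means the
pipe is entering the tile in row `i` and column `j` from the top (`d = true`) or from the
right (`d = false`).  At a crossing tile the pipe goes straight (top→bottom, right→left);
at a bumping tile it turns (top→left, right→bottom).  States with `j = 0` mean the pipe has
already exited from the left boundary at row `i`; they are absorbing. -/
def step (C : Finset (ℕ × ℕ)) (s : (ℕ × ℕ) × Bool) : (ℕ × ℕ) × Bool :=
  if s.1.2 = 0 then s
  else if s.1 ∈ C then
    (if s.2 then ((s.1.1 + 1, s.1.2), true) else ((s.1.1, s.1.2 - 1), false))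
  else
    (if s.2 then ((s.1.1, s.1.2 - 1), false) else ((s.1.1 + 1, s.1.2), true))

/-- The state of the pipe entering at the top of column `c` after `k` tracing steps. -/
def pipeState (C : Finset (ℕ × ℕ)) (c k : ℕ) : (ℕ × ℕ) × Bool :=
  (step C)^[k] ((1, c), true)

/-- The pipe entering at the top of column `c` passes through the state `s`. -/
def pipePasses (C : Finset (ℕ × ℕ)) (c : ℕ) (s : (ℕ × ℕ) × Bool) : Prop :=
  ∃ k, pipeState C c k = s

/-- The pipe entering at the top of column `c` traverses the tile `t`, entering it from the
top (`d = true`) or from the right (`d = false`). -/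
def travTile (C : Finset (ℕ × ℕ)) (c : ℕ) (t : ℕ × ℕ) (d : Bool) : Prop :=
  pipePasses C c (t, d)

/-- The row of the left boundary at which the pipe entering at the top of column `c` exits
(for a rank-`n` diagram; `2 * n + 4` tracing steps always suffice). -/
def exitRow (n : ℕ) (C : Finset (ℕ × ℕ)) (c : ℕ) : ℕ :=
  (pipeState C c (2 * n + 4)).1.1

/-- The pipes entering at the top of columns `a` and `b` cross at the tile `t`. -/
def crossAt (C : Finset (ℕ × ℕ)) (a b : ℕ) (t : ℕ × ℕ) : Prop :=
  t ∈ C ∧ ((travTile C a t true ∧ travTile C b t false) ∨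
           (travTile C b t true ∧ travTile C a t false))

/-- A (marked) pipe diagram for a word: `word` is the word (with distinct positive entries)
labelling the pipes, `C` is the set of crossing tiles and `M` the set of marked bumping
tiles.  Its rank is `word.length`. -/
structure PD where
  word : List ℕ
  C : Finset (ℕ × ℕ)
  M : Finset (ℕ × ℕ)
deriving DecidableEq

/-- The entry column of the pipe labelled `x` in a diagram for the word `v`: pipes are
labelled by the entries of `v` in increasing order from left to right along the top
boundary, so the pipe labelled `x` enters at the top of column `rank of x in v` (+1, as
columns are 1-indexed). -/
def wordCol (v : List ℕ) (x : ℕ) : ℕ := (v.filter (fun y => decide (y < x))).length + 1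

/-- `P` is a marked reduced pipe dream of the word `P.word` (for a permutation
`w = w(1)⋯w(n)` take `P.word = [w(1),…,w(n)]`): the tiles fill the rank-`n` staircase with
no crossing tile on the southeast diagonal; reading the pipe labels along the left boundary
from top to bottom gives the word (pipe labelled `word.get r` exits at row `r+1`); any two
pipes cross at most once; and a bumping tile may be marked only if the two pipes traversing
it cross at some position strictly above its row. -/
def isMRPD (P : PD) : Prop :=
  P.word.Nodup ∧ (∀ x ∈ P.word, 1 ≤ x) ∧
  P.C ⊆ staircase P.word.length ∧ (∀ t ∈ P.C, t.1 + t.2 ≤ P.word.length) ∧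
  P.M ⊆ staircase P.word.length ∧ (∀ t ∈ P.M, t ∉ P.C) ∧
  (∀ r : Fin P.word.length,
    exitRow P.word.length P.C (wordCol P.word (P.word.get r)) = (r : ℕ) + 1) ∧
  (∀ a b, 1 ≤ a → a ≤ P.word.length → 1 ≤ b → b ≤ P.word.length →
    ∀ t t', crossAt P.C a b t → crossAt P.C a b t' → t = t') ∧
  (∀ t ∈ P.M, ∃ a b, 1 ≤ a ∧ a ≤ P.word.length ∧ 1 ≤ b ∧ b ≤ P.word.length ∧
    travTile P.C a t true ∧ travTile P.C b t false ∧
    ∃ t', crossAt P.C a b t' ∧ t'.1 < t.1)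

/-- The pipe labelled `j` is removable in `P`: (i) in the column where pipe `j` enters,
every crossing tile is traversed by pipe `j` and there is no marked bumping tile; (ii) for
every crossing tile traversed by pipe `j`, the tile directly above it (if any) is not an
unmarked bumping tile; (iii) pipe `j` traverses no marked bumping tile. -/
def Removable (P : PD) (j : ℕ) : Prop :=
  j ∈ P.word ∧
  (∀ i, (i, wordCol P.word j) ∈ P.C →
    (travTile P.C (wordCol P.word j) (i, wordCol P.word j) true ∨
     travTile P.C (wordCol P.word j) (i, wordCol P.word j) false)) ∧
  (∀ i, (i, wordCol P.word j) ∉ P.M) ∧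
  (∀ t ∈ P.C,
    (travTile P.C (wordCol P.word j) t true ∨ travTile P.C (wordCol P.word j) t false) →
    2 ≤ t.1 → ((t.1 - 1, t.2) ∈ P.C ∨ (t.1 - 1, t.2) ∈ P.M)) ∧
  (∀ t ∈ P.M, ¬ travTile P.C (wordCol P.word j) t true ∧
    ¬ travTile P.C (wordCol P.word j) t false)

/-- A core marked reduced pipe dream: none of its pipes is removable. -/
def isCore (P : PD) : Prop := ∀ j, ¬ Removable P j

/-- The pipe entering at the top of column `c` crosses from column `y + 1` into column `y`
(i.e. enters some tile of column `y` from the right) at some row `≤ i`. -/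
def crossedIntoLe (C : Finset (ℕ × ℕ)) (c y i : ℕ) : Prop :=
  ∃ i' ≤ i, pipePasses C c ((i', y), false)

/-- The position (together with the entering direction `d`) of the rank-`n` diagram `(C,·)`
with removable pipe entering at column `c` corresponding to the position `t` of the
rank-`(n-1)` diagram obtained by the deletion/merging operation: tiles strictly to the right
of column `c` are shifted one unit leftward, and in each column strictly to the left of `c`
the tile pieces lying below the removed pipe are shifted one unit upward. -/
noncomputable def oldPos (C : Finset (ℕ × ℕ)) (c : ℕ) (t : ℕ × ℕ) (d : Bool) : ℕ × ℕ :=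
  if c ≤ t.2 then (t.1, t.2 + 1)
  else (t.1 + cIte (crossedIntoLe C c (if d then t.2 - 1 else t.2) t.1) 1 0, t.2)

/-- The deletion/merging operation `Φ_j`, erasing the (removable) pipe labelled `j`. -/
noncomputable def PhiOp (P : PD) (j : ℕ) : PD :=
  ⟨P.word.erase j,
   fselect (fun t => oldPos P.C (wordCol P.word j) t true ∈ P.C)
     (staircase (P.word.length - 1)),
   fselect (fun t => oldPos P.C (wordCol P.word j) t true ∈ P.M)
     (staircase (P.word.length - 1))⟩

/-- The reduction map `Φ`: successively erase removable pipes while some pipe is removable. -/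
noncomputable def Phi (P : PD) : PD :=
  letI : Decidable (∃ j, Removable P j) := Classical.propDecidable _
  if h : ∃ j, Removable P j then Phi (PhiOp P (Classical.choose h)) else P
termination_by P.word.length
decreasing_by
  have hj : Classical.choose h ∈ P.word := (Classical.choose_spec h).1
  show (P.word.erase (Classical.choose h)).length < P.word.length
  rw [List.length_erase_of_mem hj]
  have h0 : 0 < P.word.length := List.length_pos_of_mem hj
  omega

/-- The finset of all marked reduced pipe dreams of the word `v`. -/
noncomputable def MRPDF (v : List ℕ) : Finset PD :=
  fselect isMRPD
    (((staircase v.length).powerset ×ˢ (staircase v.length).powerset).image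
      (fun p => ⟨v, p.1, p.2⟩))

/-- `Υ_v(β)`: the principal specialization of the β-Grothendieck polynomial,
`Σ_{P ∈ MRPD(v)} β^{mbt(P)}` (a polynomial in `β = X`). -/
noncomputable def UpsilonW (v : List ℕ) : Polynomial ℤ :=
  ∑ P ∈ MRPDF v, (X : Polynomial ℤ) ^ P.M.card

/-- The finset of all core marked reduced pipe dreams of the word `v`. -/
noncomputable def CMRPDF (v : List ℕ) : Finset PD := fselect isCore (MRPDF v)

/-- `d_v(β) = Σ_{P ∈ CMRPD(v)} β^{mbt(P)}`. -/
noncomputable def dPoly (v : List ℕ) : Polynomial ℤ :=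
  ∑ P ∈ CMRPDF v, (X : Polynomial ℤ) ^ P.M.card

/-- Marked reduced pipe dreams of `v` in which every pipe whose label is an entry of `v`
not appearing in `u` is non-removable. -/
noncomputable def CMRPDrelF (u v : List ℕ) : Finset PD :=
  fselect (fun P => ∀ j ∈ v, j ∉ u → ¬ Removable P j) (MRPDF v)

/-- `d_{u,v}(β) = Σ_{P ∈ CMRPD(u,v)} β^{mbt(P)}`. -/
noncomputable def dRel (u v : List ℕ) : Polynomial ℤ :=
  ∑ P ∈ CMRPDrelF u v, (X : Polynomial ℤ) ^ P.M.card

/-- The number of (ordinary) reduced pipe dreams of the word `v` (marked reduced pipe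
dreams with no marked bumping tile), i.e. `Υ_v = Υ_v(0)`. -/
noncomputable def NRPD (v : List ℕ) : ℕ :=
  (fselect (fun P => P.M = (∅ : Finset (ℕ × ℕ))) (MRPDF v)).card

/-- The one-line word `[w(1),…,w(n)]` of a permutation `w ∈ S_n`. -/
def permWord {n : ℕ} (w : Equiv.Perm (Fin n)) : List ℕ :=
  List.ofFn (fun r => (w r : ℕ) + 1)

/-- `p_v(w)`: the number of occurrences of the pattern `v ∈ S_m` in `w ∈ S_n`, i.e. the
number of strictly increasing index sequences along which the entries of `w` are in the
same relative order as `v`. -/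
noncomputable def pCount {m n : ℕ} (v : Equiv.Perm (Fin m)) (w : Equiv.Perm (Fin n)) : ℕ :=
  (fselect (fun f : Fin m → Fin n =>
      StrictMono f ∧ ∀ k l, v k < v l ↔ w (f k) < w (f l))
    Finset.univ).card

/-- The polynomials `c_w(β)`, defined recursively by `c_∅(β) = 1` and
`c_w(β) = Υ_w(β) − Σ_{0 ≤ m < n} Σ_{v ∈ S_m} c_v(β)·p_v(w)`. -/
noncomputable def cPoly (n : ℕ) (w : Equiv.Perm (Fin n)) : Polynomial ℤ :=
  UpsilonW (permWord w) -
    ∑ m ∈ (Finset.range n).attach,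
      ∑ v : Equiv.Perm (Fin (m : ℕ)), (pCount v w : Polynomial ℤ) * cPoly (m : ℕ) v
termination_by n
decreasing_by exact Finset.mem_range.mp m.2

/-- The pattern `1423` as a permutation in `S_4` (0-indexed values). -/
def pat1423 : Equiv.Perm (Fin 4) :=
  ⟨![0, 3, 1, 2], ![0, 2, 3, 1], by intro x; fin_cases x <;> rfl,
    by intro x; fin_cases x <;> rfl⟩

/-- The pattern `1342` as a permutation in `S_4` (0-indexed values). -/
def pat1342 : Equiv.Perm (Fin 4) :=
  ⟨![0, 2, 3, 1], ![0, 3, 1, 2], by intro x; fin_cases x <;> rfl,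
    by intro x; fin_cases x <;> rfl⟩

/-- `perm(v)`: the standardization of a word `v` with distinct entries, the permutation
whose entries have the same relative order as `v` (junk value `1` if `v` has a repeat). -/
noncomputable def permOf (v : List ℕ) : Equiv.Perm (Fin v.length) :=
  if h : v.Nodup then
    (Equiv.ofBijective
      (fun k => (⟨v.get k, List.mem_toFinset.mpr (v.get_mem ..)⟩ : {x // x ∈ v.toFinset}))
      (by
        rw [Fintype.bijective_iff_injective_and_card]
        constructor
        · intro a b hab
          exact List.nodup_iff_injective_get.mp h (by simpa using congrArg Subtype.val hab)
        · rw [Fintype.card_fin, Fintype.card_coe, List.toFinset_card_of_nodup h])).trans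
      ((v.toFinset.orderIsoOfFin (List.toFinset_card_of_nodup h)).symm.toEquiv)
  else 1

/-- The pointer sequence of the augmenting algorithm `Ψ_j`: `psiPtr P i k` is the value of
the pointer after the first `k` columns of `P` have been processed, starting from `i`. -/
def psiPtr (P : PD) (i : ℕ) : ℕ → ℕ
  | 0 => i
  | k + 1 =>
    if (psiPtr P i k - 1, k + 1) ∈ staircase P.word.length ∧
        (psiPtr P i k - 1, k + 1) ∉ P.C ∧ (psiPtr P i k - 1, k + 1) ∉ P.M then
      psiPtr P i k - 1
    else psiPtr P i k

/-- The augmenting operation `Ψ_j`, reinserting a pipe labelled `j` into a marked reduced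
pipe dream `P` of the word `v.erase j`, producing a diagram for the word `v`. -/
noncomputable def PsiOp (P : PD) (v : List ℕ) (j : ℕ) : PD :=
  ⟨v,
   fselect (fun t =>
     if t.2 ≤ (v.filter (fun y => decide (y < j))).length then
       (if t.1 < psiPtr P (v.idxOf j + 1) (t.2 - 1) then (t.1, t.2) ∈ P.C
        else if t.1 = psiPtr P (v.idxOf j + 1) (t.2 - 1) ∧
            psiPtr P (v.idxOf j + 1) t.2 = psiPtr P (v.idxOf j + 1) (t.2 - 1) then True
        else (t.1 - 1, t.2) ∈ P.C)
     else if t.2 = (v.filter (fun y => decide (y < j))).length + 1 then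
       t.1 < psiPtr P (v.idxOf j + 1) (v.filter (fun y => decide (y < j))).length
     else (t.1, t.2 - 1) ∈ P.C) (staircase v.length),
   fselect (fun t =>
     if t.2 ≤ (v.filter (fun y => decide (y < j))).length then
       (if t.1 < psiPtr P (v.idxOf j + 1) (t.2 - 1) then (t.1, t.2) ∈ P.M
        else if t.1 = psiPtr P (v.idxOf j + 1) (t.2 - 1) then False
        else (t.1 - 1, t.2) ∈ P.M)
     else if t.2 = (v.filter (fun y => decide (y < j))).length + 1 then False
     else (t.1, t.2 - 1) ∈ P.M) (staircase v.length)⟩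


/-! ### Auxiliary theory: traces of pipes -/

section Traces

variable {C : Finset (ℕ × ℕ)} {c : ℕ}

private lemma exists_nextB (C : Finset (ℕ × ℕ)) (y a : ℕ) :
    ∃ r, a ≤ r ∧ (r, y) ∉ C := by
  refine ⟨a + (C.sup Prod.fst) + 1, by omega, fun hmem => ?_⟩
  have := Finset.le_sup (f := Prod.fst) hmem
  omega

/-- least row `r ≥ a` such that `(r,y)` is not a crossing. -/
noncomputable def nextB (C : Finset (ℕ × ℕ)) (y a : ℕ) : ℕ :=
  Nat.find (exists_nextB C y a)

lemma nextB_ge (y a : ℕ) : a ≤ nextB C y a := (Nat.find_spec (exists_nextB C y a)).1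

lemma nextB_not_mem (y a : ℕ) : (nextB C y a, y) ∉ C := (Nat.find_spec (exists_nextB C y a)).2

lemma nextB_min {y a i : ℕ} (h1 : a ≤ i) (h2 : i < nextB C y a) : (i, y) ∈ C := by
  have := Nat.find_min (exists_nextB C y a) h2
  by_contra hmem
  exact this ⟨h1, hmem⟩

lemma nextB_le {y a b : ℕ} (h1 : a ≤ b) (h2 : (b, y) ∉ C) : nextB C y a ≤ b :=
  Nat.find_le ⟨h1, h2⟩

/-- processing one column: entry row `e` into column `y` gives the exit row. -/
noncomputable def colStep (C : Finset (ℕ × ℕ)) (y e : ℕ) : ℕ :=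
  if (e, y) ∈ C then e else nextB C y (e + 1)

/-- `ent C c d` : the row at which the pipe entering at the top of column `c`
enters column `c - d` (from the right), with the convention `ent C c 0 = 0`. -/
noncomputable def ent (C : Finset (ℕ × ℕ)) (c : ℕ) : ℕ → ℕ
  | 0 => 0
  | d + 1 => colStep C (c - d) (ent C c d)

lemma ent_zero : ent C c 0 = 0 := rfl

lemma ent_succ_of_mem {d : ℕ} (h : (ent C c d, c - d) ∈ C) :
    ent C c (d + 1) = ent C c d := by
  simp [ent, colStep, h]

lemma ent_succ_of_not_mem {d : ℕ} (h : (ent C c d, c - d) ∉ C) :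
    ent C c (d + 1) = nextB C (c - d) (ent C c d + 1) := by
  simp [ent, colStep, h]

lemma ent_le_succ (d : ℕ) : ent C c d ≤ ent C c (d + 1) := by
  by_cases h : (ent C c d, c - d) ∈ C
  · rw [ent_succ_of_mem h]
  · rw [ent_succ_of_not_mem h]; have := nextB_ge (C := C) (c - d) (ent C c d + 1); omega

lemma not_mem_of_row_zero (hC1 : ∀ t ∈ C, 1 ≤ t.1) (y : ℕ) : (0, y) ∉ C := by
  intro h; exact absurd (hC1 _ h) (by omega)

lemma ent_one_eq (hC1 : ∀ t ∈ C, 1 ≤ t.1) : ent C c 1 = nextB C c 1 := by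
  have h0 : (ent C c 0, c - 0) ∉ C := by
    rw [ent_zero, Nat.sub_zero]; exact not_mem_of_row_zero hC1 c
  rw [ent_succ_of_not_mem h0, ent_zero, Nat.sub_zero]

lemma ent_one_pos (hC1 : ∀ t ∈ C, 1 ≤ t.1) : 1 ≤ ent C c 1 := by
  rw [ent_one_eq hC1]; exact nextB_ge c 1

lemma ent_pos (hC1 : ∀ t ∈ C, 1 ≤ t.1) {d : ℕ} (hd : 1 ≤ d) : 1 ≤ ent C c d := by
  induction d with
  | zero => omega
  | succ m ih =>
    rcases Nat.eq_zero_or_pos m with h | h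
    · subst h; exact ent_one_pos hC1
    · have h1 := ih (by omega)
      have h2 := ent_le_succ (C := C) (c := c) m
      omega

/-- The set of states visited by the pipe entering at the top of column `c`. -/
def inS (C : Finset (ℕ × ℕ)) (c : ℕ) (s : (ℕ × ℕ) × Bool) : Prop :=
  if s.2 then ∃ d, d < c ∧ s.1.2 = c - d ∧ ent C c d < s.1.1 ∧ s.1.1 ≤ ent C c (d + 1)
  else ∃ d, 1 ≤ d ∧ d ≤ c ∧ s.1.2 = c - d ∧ s.1.1 = ent C c d

lemma step_absorb {i : ℕ} {b : Bool} : step C ((i, 0), b) = ((i, 0), b) := by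
  simp [step]

lemma step_true_mem {i y : ℕ} (hy : y ≠ 0) (h : (i, y) ∈ C) :
    step C ((i, y), true) = ((i + 1, y), true) := by simp [step, hy, h]

lemma step_true_not_mem {i y : ℕ} (hy : y ≠ 0) (h : (i, y) ∉ C) :
    step C ((i, y), true) = ((i, y - 1), false) := by simp [step, hy, h]

lemma step_false_mem {i y : ℕ} (hy : y ≠ 0) (h : (i, y) ∈ C) :
    step C ((i, y), false) = ((i, y - 1), false) := by simp [step, hy, h]

lemma step_false_not_mem {i y : ℕ} (hy : y ≠ 0) (h : (i, y) ∉ C) :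
    step C ((i, y), false) = ((i + 1, y), true) := by simp [step, hy, h]

lemma inS_false_intro {i y d : ℕ} (hd1 : 1 ≤ d) (hdc : d ≤ c) (hy : y = c - d)
    (hi : i = ent C c d) : inS C c ((i, y), false) := by
  simp only [inS, Bool.false_eq_true, if_false]
  exact ⟨d, hd1, hdc, hy, hi⟩

lemma inS_true_intro {i y d : ℕ} (hdc : d < c) (hy : y = c - d)
    (hi1 : ent C c d < i) (hi2 : i ≤ ent C c (d + 1)) : inS C c ((i, y), true) := by
  simp only [inS, if_true]
  exact ⟨d, hdc, hy, hi1, hi2⟩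

lemma inS_closed (hC1 : ∀ t ∈ C, 1 ≤ t.1) {s : (ℕ × ℕ) × Bool} (hs : inS C c s) :
    inS C c (step C s) := by
  obtain ⟨⟨i, y⟩, b⟩ := s
  cases b
  · simp only [inS, Bool.false_eq_true, if_false] at hs
    obtain ⟨d, hd1, hdc, hy, hi⟩ := hs
    subst hy hi
    rcases Nat.eq_or_lt_of_le hdc with hdc' | hdc'
    · have h0 : c - d = 0 := by omega
      rw [h0, step_absorb]
      exact inS_false_intro hd1 hdc (by omega) rfl
    · have hy0 : c - d ≠ 0 := by omega
      by_cases hmem : (ent C c d, c - d) ∈ C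
      · rw [step_false_mem hy0 hmem]
        exact inS_false_intro (d := d + 1) (by omega) (by omega) (by omega)
          (ent_succ_of_mem hmem).symm
      · rw [step_false_not_mem hy0 hmem]
        refine inS_true_intro hdc' rfl (by omega) ?_
        rw [ent_succ_of_not_mem hmem]
        exact nextB_ge _ _
  · simp only [inS, if_true] at hs
    obtain ⟨d, hdc, hy, hi1, hi2⟩ := hs
    subst hy
    have hy0 : c - d ≠ 0 := by omega
    have hbump : (ent C c d, c - d) ∉ C := by
      intro hmem
      rw [ent_succ_of_mem hmem] at hi2; omega
    have hsucc := ent_succ_of_not_mem hbump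
    rcases Nat.eq_or_lt_of_le hi2 with heq | hlt
    · have hnm : (i, c - d) ∉ C := by rw [heq, hsucc]; exact nextB_not_mem _ _
      rw [step_true_not_mem hy0 hnm]
      exact inS_false_intro (d := d + 1) (by omega) (by omega) (by omega) heq
    · have hm : (i, c - d) ∈ C := by
        rw [hsucc] at hlt
        exact nextB_min (by omega) hlt
      rw [step_true_mem hy0 hm]
      exact inS_true_intro hdc rfl (by omega) (by omega)

lemma pipeState_succ (k : ℕ) :
    pipeState C c (k + 1) = step C (pipeState C c k) :=
  Function.iterate_succ_apply' _ _ _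

lemma passes_step {s : (ℕ × ℕ) × Bool} (h : pipePasses C c s) :
    pipePasses C c (step C s) := by
  obtain ⟨k, hk⟩ := h
  exact ⟨k + 1, by rw [pipeState_succ, hk]⟩

lemma reach_ascend {y a b : ℕ} (hy : y ≠ 0) (hab : a ≤ b)
    (h : pipePasses C c ((a, y), true))
    (hcr : ∀ i, a ≤ i → i < b → (i, y) ∈ C) : pipePasses C c ((b, y), true) := by
  induction b, hab using Nat.le_induction with
  | base => exact h
  | succ m hm ih =>
    have hp := ih (fun i h1 h2 => hcr i h1 (by omega))
    have := passes_step hp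
    rwa [step_true_mem hy (hcr m hm (by omega))] at this

lemma reach_main (hC1 : ∀ t ∈ C, 1 ≤ t.1) (hc : 1 ≤ c) : ∀ d : ℕ,
    (1 ≤ d → d ≤ c → pipePasses C c ((ent C c d, c - d), false)) ∧
    (d < c → ∀ i, ent C c d < i → i ≤ ent C c (d + 1) →
      pipePasses C c ((i, c - d), true)) := by
  have hstart : pipePasses C c ((1, c), true) := ⟨0, rfl⟩
  intro d
  induction d with
  | zero =>
    refine ⟨by omega, fun _ i hi1 hi2 => ?_⟩
    have hi2' : i ≤ nextB C c 1 := by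
      rw [← ent_one_eq hC1]; exact hi2
    have hi1' : 0 < i := by rw [ent_zero] at hi1; exact hi1
    have : pipePasses C c ((i, c), true) :=
      reach_ascend (by omega) (by omega) hstart fun r h1 h2 => nextB_min h1 (by omega)
    rw [Nat.sub_zero]
    exact this
  | succ d ih =>
    have hQ : d + 1 ≤ c → pipePasses C c ((ent C c (d + 1), c - (d + 1)), false) := by
      intro hdc
      by_cases hmem : (ent C c d, c - d) ∈ C
      · have hd1 : 1 ≤ d := by
          rcases Nat.eq_zero_or_pos d with h | h
          · exfalso; subst h
            rw [ent_zero, Nat.sub_zero] at hmem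
            exact not_mem_of_row_zero hC1 _ hmem
          · omega
        have hQd := ih.1 hd1 (by omega)
        have hst := passes_step hQd
        rw [step_false_mem (by omega) hmem] at hst
        rw [ent_succ_of_mem hmem, show c - (d + 1) = c - d - 1 from by omega]
        exact hst
      · have hsucc := ent_succ_of_not_mem hmem
        have hlt : ent C c d < ent C c (d + 1) := by
          rw [hsucc]; have := nextB_ge (C := C) (c - d) (ent C c d + 1); omega
        have hP := ih.2 (by omega) (ent C c (d + 1)) hlt le_rfl
        have hst := passes_step hP
        have hnm : (ent C c (d + 1), c - d) ∉ C := by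
          rw [hsucc]; exact nextB_not_mem _ _
        rw [step_true_not_mem (by omega) hnm] at hst
        rw [show c - (d + 1) = c - d - 1 from by omega]
        exact hst
    refine ⟨fun _ hdc => hQ hdc, fun hdc i hi1 hi2 => ?_⟩
    have hQd := hQ (by omega)
    have hbump : (ent C c (d + 1), c - (d + 1)) ∉ C := by
      intro hmem
      rw [ent_succ_of_mem hmem] at hi2; omega
    have hst := passes_step hQd
    rw [step_false_not_mem (by omega) hbump] at hst
    have hsucc := ent_succ_of_not_mem hbump
    refine reach_ascend (by omega) (by omega) hst (fun r h1 h2 => ?_)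
    refine nextB_min h1 ?_
    rw [hsucc] at hi2
    omega

lemma passes_iff_inS (hC1 : ∀ t ∈ C, 1 ≤ t.1) (hc : 1 ≤ c) (s : (ℕ × ℕ) × Bool) :
    pipePasses C c s ↔ inS C c s := by
  constructor
  · rintro ⟨k, rfl⟩
    induction k with
    | zero =>
      refine inS_true_intro (d := 0) (by omega) (by omega) (by rw [ent_zero]; omega)
        (ent_one_pos hC1)
    | succ m ih =>
      rw [pipeState_succ]
      exact inS_closed hC1 ih
  · intro hs
    obtain ⟨⟨i, y⟩, b⟩ := s
    cases b
    · simp only [inS, Bool.false_eq_true, if_false] at hs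
      obtain ⟨d, hd1, hdc, hy, hi⟩ := hs
      subst hy hi
      exact (reach_main hC1 hc d).1 hd1 hdc
    · simp only [inS, if_true] at hs
      obtain ⟨d, hdc, hy, hi1, hi2⟩ := hs
      subst hy
      exact (reach_main hC1 hc d).2 hdc i hi1 hi2

lemma trav_false_iff (hC1 : ∀ t ∈ C, 1 ≤ t.1) (hc : 1 ≤ c) (i y : ℕ) :
    pipePasses C c ((i, y), false) ↔ (y < c ∧ i = ent C c (c - y)) := by
  rw [passes_iff_inS hC1 hc]
  simp only [inS, Bool.false_eq_true, if_false]
  constructor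
  · rintro ⟨d, hd1, hdc, hy, hi⟩
    have : d = c - y := by omega
    subst this; exact ⟨by omega, hi⟩
  · rintro ⟨hyc, hi⟩
    exact ⟨c - y, by omega, by omega, by omega, hi⟩

lemma trav_true_iff (hC1 : ∀ t ∈ C, 1 ≤ t.1) (hc : 1 ≤ c) (i y : ℕ) :
    pipePasses C c ((i, y), true) ↔
      (1 ≤ y ∧ y ≤ c ∧ ent C c (c - y) < i ∧ i ≤ ent C c (c - y + 1)) := by
  rw [passes_iff_inS hC1 hc]
  simp only [inS, if_true]
  constructor
  · rintro ⟨d, hdc, hy, hi1, hi2⟩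
    have : d = c - y := by omega
    subst this
    exact ⟨by omega, by omega, hi1, hi2⟩
  · rintro ⟨hy1, hyc, hi1, hi2⟩
    have : c - y + 1 = c - y + 1 := rfl
    exact ⟨c - y, by omega, by omega, hi1, hi2⟩

lemma passes_row_pos (hC1 : ∀ t ∈ C, 1 ≤ t.1) (hc : 1 ≤ c) {s : (ℕ × ℕ) × Bool}
    (h : pipePasses C c s) : 1 ≤ s.1.1 := by
  rw [passes_iff_inS hC1 hc] at h
  obtain ⟨⟨i, y⟩, b⟩ := s
  cases b
  · simp only [inS, Bool.false_eq_true, if_false] at h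
    obtain ⟨d, hd1, _, _, hi⟩ := h
    show 1 ≤ i
    rw [hi]; exact ent_pos hC1 hd1
  · simp only [inS, if_true] at h
    obtain ⟨d, _, _, hi1, _⟩ := h
    show 1 ≤ i
    omega

end Traces

section Traces2

variable {C : Finset (ℕ × ℕ)} {c : ℕ}

lemma step_eval (i y : ℕ) (b : Bool) (hy : y ≠ 0) :
    step C ((i, y), b) =
      if (i, y) ∈ C then (if b then ((i + 1, y), true) else ((i, y - 1), false))
      else (if b then ((i, y - 1), false) else ((i + 1, y), true)) := by
  simp [step, hy]

/-- backward uniqueness of `step` on non-absorbed states. -/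
lemma step_prev_unique {s1 s2 : (ℕ × ℕ) × Bool} (h1 : s1.1.2 ≠ 0) (h2 : s2.1.2 ≠ 0)
    (heq : step C s1 = step C s2) : s1 = s2 := by
  obtain ⟨⟨i1, y1⟩, b1⟩ := s1
  obtain ⟨⟨i2, y2⟩, b2⟩ := s2
  simp only at h1 h2
  rw [step_eval i1 y1 b1 h1, step_eval i2 y2 b2 h2] at heq
  cases b1 <;> cases b2 <;>
    by_cases m1 : (i1, y1) ∈ C <;> by_cases m2 : (i2, y2) ∈ C <;>
    simp only [m1, m2, eq_self_iff_true, Bool.false_eq_true, Bool.true_eq_false, if_true, if_false,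
      Prod.mk.injEq, and_true, and_false, true_and] at heq <;>
    first
    | (exfalso;
       obtain ⟨ha, hb⟩ := heq;
       have hyy : y1 = y2 := by omega;
       have hii : i1 = i2 := by omega;
       subst hyy; subst hii;
       first
       | exact absurd m1 m2
       | exact absurd m2 m1)
    | (obtain ⟨ha, hb⟩ := heq;
       have hyy : y1 = y2 := by omega;
       have hii : i1 = i2 := by omega;
       subst hyy; subst hii;
       rfl)

lemma step_out_true {u : (ℕ × ℕ) × Bool} {r y : ℕ} (hu : u.1.2 ≠ 0)
    (h : step C u = ((r, y), true)) : r = u.1.1 + 1 := by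
  obtain ⟨⟨i, yy⟩, b⟩ := u
  simp only at hu
  rw [step_eval i yy b hu] at h
  by_cases m : (i, yy) ∈ C <;> cases b <;>
    simp only [m, eq_self_iff_true, Bool.false_eq_true, Bool.true_eq_false, if_true, if_false,
      Prod.mk.injEq, and_true, and_false, true_and] at h <;>
    (show r = i + 1; obtain ⟨ha, hb⟩ := h; omega)

lemma step_col_of_absorbed {u : (ℕ × ℕ) × Bool} (hu : u.1.2 = 0) : step C u = u := by
  obtain ⟨⟨i, yy⟩, b⟩ := u
  simp only at hu
  subst hu
  exact step_absorb

lemma passes_disjoint (hC1 : ∀ t ∈ C, 1 ≤ t.1) {c c' : ℕ} (hc : 1 ≤ c) (hc' : 1 ≤ c')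
    (hne : c ≠ c') {s : (ℕ × ℕ) × Bool} (hcol : s.1.2 ≠ 0)
    (h : pipePasses C c s) (h' : pipePasses C c' s) : False := by
  obtain ⟨k, hk⟩ := h
  obtain ⟨k', hk'⟩ := h'
  have main : ∀ N k k' (s : (ℕ × ℕ) × Bool), k + k' ≤ N → s.1.2 ≠ 0 →
      pipeState C c k = s → pipeState C c' k' = s → False := by
    intro N
    induction N with
    | zero =>
      intro k k' s hN hcol2 hk hk'
      have hk0 : k = 0 := by omega
      have hk'0 : k' = 0 := by omega
      subst hk0 hk'0
      rw [show pipeState C c 0 = ((1, c), true) from rfl] at hk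
      rw [show pipeState C c' 0 = ((1, c'), true) from rfl] at hk'
      rw [← hk'] at hk
      simp only [Prod.mk.injEq] at hk
      exact hne hk.1.2
    | succ N ih =>
      intro k k' s hN hcol2 hk hk'
      match k, k' with
      | 0, 0 =>
        exact ih 0 0 s (by omega) hcol2 hk hk'
      | 0, m' + 1 =>
        rw [show pipeState C c 0 = ((1, c), true) from rfl] at hk
        subst hk
        rw [pipeState_succ] at hk'
        have hucol : (pipeState C c' m').1.2 ≠ 0 := by
          intro h0
          rw [step_col_of_absorbed h0] at hk'
          rw [hk'] at h0
          exact hcol2 h0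
        have hr := step_out_true hucol hk'
        have hrow := passes_row_pos hC1 hc' (s := pipeState C c' m') ⟨m', rfl⟩
        omega
      | m + 1, 0 =>
        rw [show pipeState C c' 0 = ((1, c'), true) from rfl] at hk'
        subst hk'
        rw [pipeState_succ] at hk
        have hucol : (pipeState C c m).1.2 ≠ 0 := by
          intro h0
          rw [step_col_of_absorbed h0] at hk
          rw [hk] at h0
          exact hcol2 h0
        have hr := step_out_true hucol hk
        have hrow := passes_row_pos hC1 hc (s := pipeState C c m) ⟨m, rfl⟩
        omega
      | m + 1, m' + 1 =>
        rw [pipeState_succ] at hk hk'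
        have hucol : (pipeState C c m).1.2 ≠ 0 := by
          intro h0
          rw [step_col_of_absorbed h0] at hk
          rw [hk] at h0
          exact hcol2 h0
        have hucol' : (pipeState C c' m').1.2 ≠ 0 := by
          intro h0
          rw [step_col_of_absorbed h0] at hk'
          rw [hk'] at h0
          exact hcol2 h0
        have huu := step_prev_unique hucol hucol' (by rw [hk, hk'])
        exact ih m m' (pipeState C c m) (by omega) hucol rfl (by rw [huu])
  exact main (k + k') k k' s le_rfl hcol hk hk'

/-- entry rows of two distinct pipes into the same column are distinct. -/
lemma ent_ne (hC1 : ∀ t ∈ C, 1 ≤ t.1) {c c' y : ℕ} (hc : 1 ≤ c) (hc' : 1 ≤ c')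
    (hne : c ≠ c') (hy : 1 ≤ y) (hyc : y < c) (hyc' : y < c') :
    ent C c (c - y) ≠ ent C c' (c' - y) := by
  intro heq
  refine passes_disjoint hC1 hc hc' hne
    (s := ((ent C c (c - y), y), false)) (by show y ≠ 0; omega) ?_ ?_
  · rw [trav_false_iff hC1 hc]; exact ⟨hyc, rfl⟩
  · rw [trav_false_iff hC1 hc', heq]; exact ⟨hyc', rfl⟩

/-- boundedness of entry rows inside the staircase. -/
lemma ent_sum_le {n : ℕ} (hCs : ∀ t ∈ C, t.1 + t.2 ≤ n) (hcn : c ≤ n + 1) :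
    ∀ d, d ≤ c → ent C c d + (c - d) ≤ n + 1 := by
  intro d
  induction d with
  | zero => intro _; rw [ent_zero]; omega
  | succ m ih =>
    intro hdc
    have ihm := ih (by omega)
    by_cases hmem : (ent C c m, c - m) ∈ C
    · rw [ent_succ_of_mem hmem]
      have := hCs _ hmem
      omega
    · rw [ent_succ_of_not_mem hmem]
      have hb : (n + 2 - (c - m), c - m) ∉ C := by
        intro hmem2
        have := hCs _ hmem2
        omega
      have hle : nextB C (c - m) (ent C c m + 1) ≤ n + 2 - (c - m) :=
        nextB_le (by omega) hb
      omega

end Traces2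

section DelStep

lemma nextB_eq {X : Finset (ℕ × ℕ)} {y a b : ℕ} (hab : a ≤ b)
    (hmem : ∀ i, a ≤ i → i < b → (i, y) ∈ X) (hb : (b, y) ∉ X) : nextB X y a = b := by
  refine le_antisymm (nextB_le hab hb) ?_
  by_contra h
  push_neg at h
  exact (nextB_not_mem (C := X) y a) (hmem _ (nextB_ge _ _) h)

lemma colStep_congr {D C : Finset (ℕ × ℕ)} {y1 y2 : ℕ} (E : ℕ)
    (hrel : ∀ i, ((i, y1) ∈ D ↔ (i, y2) ∈ C)) : colStep D y1 E = colStep C y2 E := by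
  by_cases hmem : (E, y2) ∈ C
  · rw [colStep, colStep, if_pos ((hrel E).mpr hmem), if_pos hmem]
  · rw [colStep, colStep, if_neg (fun h => hmem ((hrel E).mp h)), if_neg hmem]
    refine nextB_eq (nextB_ge _ _) (fun i h1 h2 => (hrel i).mpr (nextB_min h1 h2))
      (fun h => nextB_not_mem (C := C) y2 (E + 1) ((hrel _).mp h))

/-- The key local lemma: processing a column of the reduced diagram (with the pipe-`j`
passage through that column deleted) relates to processing the original column.
`r` is the row where pipe `j` enters the column (from the right), `rb` the row at which
it leaves it (to the left); the deleted row is `rb`. -/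
lemma delStep {D C : Finset (ℕ × ℕ)} {y r rb E : ℕ}
    (hrel : ∀ i, ((i, y) ∈ D ↔ (i + (if rb ≤ i then 1 else 0), y) ∈ C))
    (hcase : (rb = r ∧ (r, y) ∈ C) ∨ (rb = r + 1 ∧ (r, y) ∉ C ∧ (r + 1, y) ∉ C))
    (hr : 1 ≤ r) (hEr : E ≠ r) :
    colStep D y (E - (if r ≤ E then 1 else 0)) =
      colStep C y E - (if rb ≤ colStep C y E then 1 else 0) := by
  by_cases hmemE : (E, y) ∈ C
  · -- the old pipe crosses straight: old exit = E
    have hFold : colStep C y E = E := by rw [colStep, if_pos hmemE]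
    rw [hFold]
    by_cases hrE : r ≤ E
    · have hrE' : r < E := by omega
      have hrbE : rb ≤ E - 1 := by
        rcases hcase with ⟨h1, _⟩ | ⟨h1, _, h3⟩
        · omega
        · rcases Nat.lt_or_ge (r + 1) E with h | h
          · omega
          · exfalso; apply h3; rwa [show r + 1 = E by omega]
      rw [if_pos hrE]
      have hD : (E - 1, y) ∈ D := by
        rw [hrel, if_pos hrbE, show E - 1 + 1 = E by omega]; exact hmemE
      rw [colStep, if_pos hD, if_pos (show rb ≤ E by omega)]
    · have hrbE : ¬ rb ≤ E := by rcases hcase with ⟨h1, _⟩ | ⟨h1, _, _⟩ <;> omega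
      rw [if_neg hrE, if_neg hrbE, Nat.sub_zero]
      have hD : (E, y) ∈ D := by
        rw [hrel, if_neg hrbE, Nat.add_zero]; exact hmemE
      rw [colStep, if_pos hD]
  · -- the old pipe bumps: old exit F = nextB C y (E+1)
    have hFold : colStep C y E = nextB C y (E + 1) := by rw [colStep, if_neg hmemE]
    rw [hFold]
    set F := nextB C y (E + 1) with hF
    have hFE : E + 1 ≤ F := nextB_ge _ _
    have hFnm : (F, y) ∉ C := nextB_not_mem _ _
    have hFmin : ∀ i, E + 1 ≤ i → i < F → (i, y) ∈ C := fun i h1 h2 => nextB_min h1 h2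
    by_cases hrE : r ≤ E
    · -- pipe j strictly above: result F − 1
      have hrE' : r < E := by omega
      have hrb : rb ≤ E := by
        rcases hcase with ⟨h1, _⟩ | ⟨h1, _, _⟩ <;> omega
      rw [if_pos hrE]
      have hED : (E - 1, y) ∉ D := by
        rw [hrel]
        by_cases h : rb ≤ E - 1
        · rw [if_pos h, show E - 1 + 1 = E by omega]; exact hmemE
        · rw [if_neg h, Nat.add_zero]
          have hrbE2 : rb = E := by omega
          rcases hcase with ⟨h1, h2⟩ | ⟨h1, h2, h3⟩
          · omega
          · rwa [show E - 1 = r by omega]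
      rw [colStep, if_neg hED]
      have hnb : nextB D y (E - 1 + 1) = F - 1 := by
        refine nextB_eq (by omega) (fun i h1 h2 => ?_) ?_
        · rw [hrel, if_pos (by omega), ]
          exact hFmin _ (by omega) (by omega)
        · rw [hrel, if_pos (by omega), show F - 1 + 1 = F by omega]
          exact hFnm
      rw [hnb, if_pos (show rb ≤ F by omega)]
    · -- pipe j enters at or below E
      have hrE' : E < r := by omega
      have hrbE : ¬ rb ≤ E := by rcases hcase with ⟨h1, _⟩ | ⟨h1, _, _⟩ <;> omega
      rw [if_neg hrE, Nat.sub_zero]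
      have hED : (E, y) ∉ D := by
        rw [hrel, if_neg hrbE, Nat.add_zero]; exact hmemE
      rw [colStep, if_neg hED]
      rcases Nat.lt_or_ge r F with hrF | hrF
      · -- pipe j crosses inside the run: crossing case, result F − 1
        have hrmem : (r, y) ∈ C := hFmin _ (by omega) hrF
        have hrbr : rb = r := by
          rcases hcase with ⟨h1, _⟩ | ⟨h1, h2, _⟩
          · exact h1
          · exact absurd hrmem h2
        have hnb : nextB D y (E + 1) = F - 1 := by
          refine nextB_eq (by omega) (fun i h1 h2 => ?_) ?_
          · rw [hrel]
            by_cases h : rb ≤ i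
            · rw [if_pos h]
              exact hFmin _ (by omega) (by omega)
            · rw [if_neg h, Nat.add_zero]
              exact hFmin _ (by omega) (by omega)
          · rw [hrel, if_pos (by omega), show F - 1 + 1 = F by omega]
            exact hFnm
        rw [hnb, if_pos (show rb ≤ F by omega)]
      · rcases Nat.eq_or_lt_of_le hrF with hrF' | hrF'
        · -- pipe j enters exactly at the old bump row: bump case, result F
          have hbump : rb = r + 1 ∧ (r, y) ∉ C ∧ (r + 1, y) ∉ C := by
            rcases hcase with ⟨h1, h2⟩ | h
            · exfalso; exact hFnm (by rwa [hrF'])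
            · exact h
          obtain ⟨hrb1, _, _⟩ := hbump
          have hnb : nextB D y (E + 1) = F := by
            refine nextB_eq (by omega) (fun i h1 h2 => ?_) ?_
            · rw [hrel, if_neg (by omega), Nat.add_zero]
              exact hFmin _ (by omega) (by omega)
            · rw [hrel, if_neg (by omega), Nat.add_zero]
              exact hFnm
          rw [hnb, if_neg (by omega)]
          omega
        · -- pipe j strictly below: result F
          have hrbF : ¬ rb ≤ F := by rcases hcase with ⟨h1, _⟩ | ⟨h1, _, _⟩ <;> omega
          have hnb : nextB D y (E + 1) = F := by
            refine nextB_eq (by omega) (fun i h1 h2 => ?_) ?_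
            · rw [hrel, if_neg (by omega), Nat.add_zero]
              exact hFmin _ (by omega) (by omega)
            · rw [hrel, if_neg (by omega), Nat.add_zero]
              exact hFnm
          rw [hnb, if_neg hrbF]
          omega

end DelStep

section Glue

lemma staircase_mem_iff {n : ℕ} {t : ℕ × ℕ} :
    t ∈ staircase n ↔ (1 ≤ t.1 ∧ 1 ≤ t.2 ∧ t.1 + t.2 ≤ n + 1) := by
  unfold staircase
  rw [Finset.mem_filter, Finset.mem_product, Finset.mem_range, Finset.mem_range]
  constructor
  · rintro ⟨⟨h1, h2⟩, h3⟩; exact h3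
  · rintro ⟨h1, h2, h3⟩; exact ⟨⟨by omega, by omega⟩, h1, h2, h3⟩

lemma mem_fselect {α : Type*} {p : α → Prop} {s : Finset α} {a : α} :
    a ∈ fselect p s ↔ a ∈ s ∧ p a := by
  unfold fselect
  exact @Finset.mem_filter α p (fun _ => Classical.propDecidable _) s a

lemma cIte_pos {α : Sort*} {p : Prop} (h : p) (a b : α) : cIte p a b = a := by
  unfold cIte; exact if_pos h

lemma cIte_neg {α : Sort*} {p : Prop} (h : ¬ p) (a b : α) : cIte p a b = b := by
  unfold cIte; exact if_neg h

variable {n : ℕ} (w : Equiv.Perm (Fin n))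

lemma permWord_length : (permWord w).length = n := by simp [permWord]

lemma permWord_nodup : (permWord w).Nodup := by
  rw [permWord, List.nodup_ofFn]
  intro a b hab
  simp only at hab
  exact w.injective (Fin.ext (by omega))

lemma permWord_mem_iff {x : ℕ} : x ∈ permWord w ↔ 1 ≤ x ∧ x ≤ n := by
  rw [permWord, List.mem_ofFn]
  constructor
  · rintro ⟨r, hr⟩
    have hr' : (w r : ℕ) + 1 = x := hr
    have := (w r).isLt
    omega
  · rintro ⟨h1, h2⟩
    refine ⟨w.symm ⟨x - 1, by omega⟩, ?_⟩
    simp only [Equiv.apply_symm_apply]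
    omega

lemma permWord_filter_length {x : ℕ} (hx : x ≤ n + 1) :
    ((permWord w).filter (fun y => decide (y < x))).length = x - 1 := by
  set L := (permWord w).filter (fun y => decide (y < x)) with hL
  have hnd : L.Nodup := (permWord_nodup w).filter _
  have hTF : L.toFinset = Finset.Icc 1 (x - 1) := by
    ext a
    rw [List.mem_toFinset, hL, List.mem_filter, Finset.mem_Icc, decide_eq_true_eq,
      permWord_mem_iff]
    omega
  have hcard := List.toFinset_card_of_nodup hnd
  rw [hTF, Nat.card_Icc] at hcard
  omega

lemma wordCol_permWord {x : ℕ} (hx1 : 1 ≤ x) (hx : x ≤ n + 1) :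
    wordCol (permWord w) x = x := by
  rw [wordCol, permWord_filter_length w hx]
  omega

lemma erase_permWord_nodup {jj : ℕ} : ((permWord w).erase jj).Nodup :=
  (permWord_nodup w).erase _

lemma mem_erase_permWord {jj x : ℕ} :
    x ∈ (permWord w).erase jj ↔ (x ≠ jj ∧ 1 ≤ x ∧ x ≤ n) := by
  rw [(permWord_nodup w).mem_erase_iff, permWord_mem_iff]

lemma erase_permWord_length {jj : ℕ} (h : jj ∈ permWord w) :
    ((permWord w).erase jj).length = n - 1 := by
  rw [List.length_erase_of_mem h, permWord_length]

lemma wordCol_erase_permWord {jj x : ℕ} (hj1 : 1 ≤ jj) (hjn : jj ≤ n)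
    (hx1 : 1 ≤ x) (hx : x ≤ n + 1) :
    wordCol ((permWord w).erase jj) x = x - (if jj < x then 1 else 0) := by
  rw [wordCol]
  set L := ((permWord w).erase jj).filter (fun y => decide (y < x)) with hL
  have hnd : L.Nodup := (erase_permWord_nodup w).filter _
  have hTF : L.toFinset = (Finset.Icc 1 (x - 1)).erase jj := by
    ext a
    rw [List.mem_toFinset, hL, List.mem_filter, Finset.mem_erase, Finset.mem_Icc,
      decide_eq_true_eq, mem_erase_permWord]
    omega
  have hcard := List.toFinset_card_of_nodup hnd
  rw [hTF] at hcard
  by_cases hmem : jj ∈ Finset.Icc 1 (x - 1)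
  · rw [Finset.card_erase_of_mem hmem, Nat.card_Icc] at hcard
    rw [Finset.mem_Icc] at hmem
    rw [← hcard, if_pos (by omega)]
    omega
  · rw [Finset.erase_eq_of_notMem hmem, Nat.card_Icc] at hcard
    rw [Finset.mem_Icc] at hmem
    rw [← hcard, if_neg (by omega)]
    omega

lemma crossedIntoLe_iff {C : Finset (ℕ × ℕ)} {c : ℕ} (hC1 : ∀ t ∈ C, 1 ≤ t.1)
    (hc : 1 ≤ c) (y i : ℕ) :
    crossedIntoLe C c y i ↔ (y < c ∧ ent C c (c - y) ≤ i) := by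
  unfold crossedIntoLe
  constructor
  · rintro ⟨i', hi', hp⟩
    rw [trav_false_iff hC1 hc] at hp
    exact ⟨hp.1, by omega⟩
  · rintro ⟨hyc, hle⟩
    exact ⟨ent C c (c - y), hle, by rw [trav_false_iff hC1 hc]; exact ⟨hyc, rfl⟩⟩

end Glue

section MainSetup

/-- All facts needed about the ambient marked reduced pipe dream and the removable
pipe `j` (in a rank-`n` diagram, where `wordCol` of `j` is `j` itself). -/
structure Ctx (n : ℕ) (C M : Finset (ℕ × ℕ)) (j : ℕ) : Prop where
  hC1 : ∀ t ∈ C, 1 ≤ t.1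
  hC2 : ∀ t ∈ C, 1 ≤ t.2
  hCs : ∀ t ∈ C, t.1 + t.2 ≤ n
  hM : ∀ t ∈ M, 1 ≤ t.1 ∧ 1 ≤ t.2 ∧ t.1 + t.2 ≤ n + 1
  hMC : ∀ t ∈ M, t ∉ C
  hj1 : 1 ≤ j
  hjn : j ≤ n
  rawB : ∀ i : ℕ, (i, j) ∈ C →
    (pipePasses C j (((i, j) : ℕ × ℕ), true) ∨ pipePasses C j (((i, j) : ℕ × ℕ), false))
  rawCm : ∀ i : ℕ, ((i, j) : ℕ × ℕ) ∉ M
  rawD : ∀ t ∈ C, (pipePasses C j (t, true) ∨ pipePasses C j (t, false)) → 2 ≤ t.1 →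
    ((t.1 - 1, t.2) ∈ C ∨ (t.1 - 1, t.2) ∈ M)
  rawE : ∀ t ∈ M, ¬ pipePasses C j (t, true) ∧ ¬ pipePasses C j (t, false)

variable {n : ℕ} {C M : Finset (ℕ × ℕ)} {j : ℕ}

namespace Ctx

lemma Rpos (h : Ctx n C M j) {d : ℕ} (hd : 1 ≤ d) : 1 ≤ ent C j d := ent_pos h.hC1 hd

lemma Rsum (h : Ctx n C M j) {d : ℕ} (hd : d ≤ j) : ent C j d + (j - d) ≤ n + 1 := by
  have := h.hjn
  exact ent_sum_le h.hCs (by omega) d hd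

/-- Structure of the entry column of pipe `j` : crossings are exactly the rows
strictly above `ent C j 1`. -/
lemma colj (h : Ctx n C M j) (i : ℕ) : (i, j) ∈ C ↔ (1 ≤ i ∧ i < ent C j 1) := by
  constructor
  · intro hmem
    refine ⟨h.hC1 _ hmem, ?_⟩
    rcases h.rawB i hmem with ht | hf
    · rw [trav_true_iff h.hC1 h.hj1] at ht
      obtain ⟨-, -, h3, h4⟩ := ht
      rw [show j - j = 0 from by omega] at h3 h4
      rw [ent_zero] at h3
      have h4' : i ≤ ent C j 1 := h4
      have hne : (ent C j 1, j) ∉ C := by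
        rw [ent_one_eq h.hC1]; exact nextB_not_mem _ _
      rcases Nat.eq_or_lt_of_le h4' with he | hlt
      · exact absurd (he ▸ hmem) hne
      · exact hlt
    · rw [trav_false_iff h.hC1 h.hj1] at hf
      omega
  · rintro ⟨h1, h2⟩
    rw [ent_one_eq h.hC1] at h2
    exact nextB_min h1 h2

/-- pipe `j` passes through every column `y < j`, entering it at row `ent C j (j - y)`. -/
lemma passes_entry (h : Ctx n C M j) {y : ℕ} (hy : y < j) :
    pipePasses C j ((ent C j (j - y), y), false) := by
  rw [trav_false_iff h.hC1 h.hj1]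
  exact ⟨hy, rfl⟩

/-- The two-bump structure: in each column `y = j - d < j`, pipe `j` either crosses
(straight) or occupies two consecutive bumping tiles. -/
lemma Rstep (h : Ctx n C M j) {d : ℕ} (hd1 : 1 ≤ d) (hdj : d < j) :
    ((ent C j d, j - d) ∈ C ∧ ent C j (d + 1) = ent C j d) ∨
    ((ent C j d, j - d) ∉ C ∧ ent C j (d + 1) = ent C j d + 1 ∧
      (ent C j d + 1, j - d) ∉ C) := by
  by_cases hmem : (ent C j d, j - d) ∈ C
  · exact Or.inl ⟨hmem, ent_succ_of_mem hmem⟩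
  · right
    have hnot2 : (ent C j d + 1, j - d) ∉ C := by
      intro hmem2
      have htrav : pipePasses C j ((ent C j d + 1, j - d), true) := by
        rw [trav_true_iff h.hC1 h.hj1]
        refine ⟨by omega, by omega, ?_, ?_⟩
        · rw [show j - (j - d) = d from by omega]; omega
        · rw [show j - (j - d) + 1 = d + 1 from by omega]
          rw [ent_succ_of_not_mem hmem]
          exact nextB_ge _ _
      have hrow : 2 ≤ ent C j d + 1 := by have := h.Rpos hd1; omega
      have h2 := h.rawD _ hmem2 (Or.inl htrav) hrow
      simp only [Nat.add_sub_cancel] at h2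
      rcases h2 with hC | hM2
      · exact hmem hC
      · refine (h.rawE _ hM2).2 ?_
        rw [trav_false_iff h.hC1 h.hj1]
        exact ⟨by omega, by rw [show j - (j - d) = d from by omega]⟩
    refine ⟨hmem, ?_, hnot2⟩
    rw [ent_succ_of_not_mem hmem]
    exact nextB_eq le_rfl (fun i h1 h2 => absurd h1 (by omega)) hnot2

end Ctx

/-- The crossing tiles of the reduced diagram `Φ_j(P)`. -/
noncomputable def QC (n : ℕ) (C : Finset (ℕ × ℕ)) (j : ℕ) : Finset (ℕ × ℕ) :=
  fselect (fun t => oldPos C j t true ∈ C) (staircase (n - 1))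

/-- The marked tiles of the reduced diagram `Φ_j(P)`. -/
noncomputable def QM (n : ℕ) (C M : Finset (ℕ × ℕ)) (j : ℕ) : Finset (ℕ × ℕ) :=
  fselect (fun t => oldPos C j t true ∈ M) (staircase (n - 1))

lemma oldPos_high {i y : ℕ} (hy : j ≤ y) : oldPos C j (i, y) true = (i, y + 1) := by
  unfold oldPos
  rw [if_pos hy]

lemma oldPos_low (h : Ctx n C M j) {i y : ℕ} (hy1 : 1 ≤ y) (hy : y < j) :
    oldPos C j (i, y) true = (i + (if ent C j (j - y + 1) ≤ i then 1 else 0), y) := by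
  have h0 : oldPos C j (i, y) true = (i + cIte (crossedIntoLe C j (y - 1) i) 1 0, y) := by
    simp [oldPos, show ¬ j ≤ y from by omega]
  rw [h0]
  have hiff : crossedIntoLe C j (y - 1) i ↔ ent C j (j - y + 1) ≤ i := by
    rw [crossedIntoLe_iff h.hC1 h.hj1]
    constructor
    · rintro ⟨-, hh⟩; rwa [show j - (y - 1) = j - y + 1 from by omega] at hh
    · intro hh; exact ⟨by omega, by rwa [show j - (y - 1) = j - y + 1 from by omega]⟩
  by_cases hc : ent C j (j - y + 1) ≤ i
  · rw [cIte_pos (hiff.mpr hc), if_pos hc]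
  · rw [cIte_neg (fun hh => hc (hiff.mp hh)), if_neg hc]

lemma mem_QC_high (h : Ctx n C M j) {i y : ℕ} (hy : j ≤ y) :
    ((i, y) ∈ QC n C j) ↔ (i, y + 1) ∈ C := by
  unfold QC
  rw [mem_fselect, oldPos_high hy]
  constructor
  · rintro ⟨-, h2⟩; exact h2
  · intro h2
    have hs := h.hCs _ h2
    have h1 := h.hC1 _ h2
    have hj1 := h.hj1
    have hjn := h.hjn
    simp only at hs h1
    refine ⟨staircase_mem_iff.mpr ⟨h1, by omega, by omega⟩, h2⟩

lemma mem_QC_low (h : Ctx n C M j) {i y : ℕ} (hy1 : 1 ≤ y) (hy : y < j) :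
    ((i, y) ∈ QC n C j) ↔
      (i + (if ent C j (j - y + 1) ≤ i then 1 else 0), y) ∈ C := by
  unfold QC
  rw [mem_fselect, oldPos_low h hy1 hy]
  constructor
  · rintro ⟨-, h2⟩; exact h2
  · intro h2
    have hs := h.hCs _ h2
    have h1 := h.hC1 _ h2
    simp only at hs h1
    have hrp : 1 ≤ ent C j (j - y + 1) := h.Rpos (by omega)
    refine ⟨staircase_mem_iff.mpr ⟨?_, by omega, ?_⟩, h2⟩
    · by_cases hc : ent C j (j - y + 1) ≤ i
      · omega
      · rw [if_neg hc] at h2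
        have := h.hC1 _ h2
        simp only at this
        omega
    · by_cases hc : ent C j (j - y + 1) ≤ i <;>
        [rw [if_pos hc] at hs; rw [if_neg hc] at hs] <;> omega

lemma mem_QM_iff {i y : ℕ} :
    ((i, y) ∈ QM n C M j) ↔
      ((i, y) ∈ staircase (n - 1) ∧ oldPos C j (i, y) true ∈ M) := by
  unfold QM
  rw [mem_fselect]

lemma QC_row_pos : ∀ t ∈ QC n C j, 1 ≤ t.1 := by
  intro t ht
  unfold QC at ht
  rw [mem_fselect] at ht
  exact (staircase_mem_iff.mp ht.1).1

end MainSetup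

section Invariant

variable {n : ℕ} {C M : Finset (ℕ × ℕ)} {j : ℕ}

lemma ent_succ_eq (X : Finset (ℕ × ℕ)) (q d : ℕ) :
    ent X q (d + 1) = colStep X (q - d) (ent X q d) := rfl

/-- Low step of the invariant: processing a column `y + 1 < j`. -/
lemma low_step (h : Ctx n C M j) {p y pp : ℕ} (hpj : p ≠ j)
    (hylt : y + 1 < j) (hy1p : y + 1 ≤ p) (hy1pp : y + 1 ≤ pp)
    (hA1 : ent (QC n C j) pp (pp - (y + 1 - (if j < y + 1 then 1 else 0))) =
      ent C p (p - (y + 1)) -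
        (if y + 1 < j ∧ ent C j (j - (y + 1)) ≤ ent C p (p - (y + 1)) then 1 else 0)) :
    ent (QC n C j) pp (pp - (y - (if j < y then 1 else 0))) =
      ent C p (p - y) -
        (if y < j ∧ ent C j (j - y) ≤ ent C p (p - y) then 1 else 0) := by
  rw [if_neg (show ¬ j < y + 1 by omega), Nat.sub_zero] at hA1
  rw [if_neg (show ¬ j < y by omega), Nat.sub_zero]
  set r := ent C j (j - (y + 1)) with hr
  set rb := ent C j (j - y) with hrb
  set E := ent C p (p - (y + 1)) with hE
  have hA1' : ent (QC n C j) pp (pp - (y + 1)) = E - (if r ≤ E then 1 else 0) := by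
    rw [hA1]
    by_cases hcc : r ≤ E
    · rw [if_pos ⟨by omega, hcc⟩, if_pos hcc]
    · rw [if_neg (fun hc => hcc hc.2), if_neg hcc]
  have hrbsucc : rb = ent C j ((j - (y + 1)) + 1) := by
    rw [hrb, show j - y = (j - (y + 1)) + 1 from by omega]
  have hcase : (rb = r ∧ (r, y + 1) ∈ C) ∨
      (rb = r + 1 ∧ (r, y + 1) ∉ C ∧ (r + 1, y + 1) ∉ C) := by
    have hst := h.Rstep (d := j - (y + 1)) (by omega) (by omega)
    rw [show j - (j - (y + 1)) = y + 1 from by omega] at hst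
    rcases hst with ⟨h1, h2⟩ | ⟨h1, h2, h3⟩
    · exact Or.inl ⟨by rw [hrbsucc, h2], h1⟩
    · exact Or.inr ⟨by rw [hrbsucc, h2], h1, h3⟩
  have hrel : ∀ i, ((i, y + 1) ∈ QC n C j ↔
      (i + (if rb ≤ i then 1 else 0), y + 1) ∈ C) := by
    intro i
    rw [mem_QC_low h (by omega) hylt, hrbsucc]
  have hEr : E ≠ r := by
    rcases Nat.eq_or_lt_of_le hy1p with he | hlt
    · have hE0 : E = 0 := by rw [hE, show p - (y + 1) = 0 from by omega, ent_zero]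
      have := h.Rpos (d := j - (y + 1)) (by omega)
      omega
    · exact ent_ne h.hC1 (show 1 ≤ p by omega) h.hj1 hpj (by omega) hlt hylt
  have hds := delStep (D := QC n C j) hrel hcase (h.Rpos (by omega)) hEr
  have hnew : ent (QC n C j) pp ((pp - (y + 1)) + 1) =
      colStep (QC n C j) (y + 1) (ent (QC n C j) pp (pp - (y + 1))) := by
    rw [ent_succ_eq, show pp - (pp - (y + 1)) = y + 1 from by omega]
  have hold : ent C p ((p - (y + 1)) + 1) = colStep C (y + 1) E := by
    rw [ent_succ_eq, show p - (p - (y + 1)) = y + 1 from by omega]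
  rw [show pp - y = (pp - (y + 1)) + 1 from by omega, hnew, hA1', hds,
    show p - y = (p - (y + 1)) + 1 from by omega, hold]
  by_cases hcc : rb ≤ colStep C (y + 1) E
  · rw [if_pos hcc, if_pos ⟨by omega, hcc⟩]
  · rw [if_neg hcc, if_neg (fun hc => hcc hc.2)]

/-- High step of the invariant: processing a column `y + 1 > j + 1`. -/
lemma high_step (h : Ctx n C M j) {p y pp : ℕ}
    (hjy : j < y) (hy1p : y + 1 ≤ p) (hypp : y ≤ pp)
    (hA1 : ent (QC n C j) pp (pp - (y + 1 - (if j < y + 1 then 1 else 0))) =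
      ent C p (p - (y + 1)) -
        (if y + 1 < j ∧ ent C j (j - (y + 1)) ≤ ent C p (p - (y + 1)) then 1 else 0)) :
    ent (QC n C j) pp (pp - (y - (if j < y then 1 else 0))) =
      ent C p (p - y) -
        (if y < j ∧ ent C j (j - y) ≤ ent C p (p - y) then 1 else 0) := by
  rw [if_pos (show j < y + 1 by omega), if_neg (show ¬ (y + 1 < j ∧ _) from
    fun hc => by omega), Nat.sub_zero, show y + 1 - 1 = y from by omega] at hA1
  rw [if_pos hjy, if_neg (show ¬ (y < j ∧ _) from fun hc => by omega), Nat.sub_zero]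
  have hnew : ent (QC n C j) pp ((pp - y) + 1) =
      colStep (QC n C j) y (ent (QC n C j) pp (pp - y)) := by
    rw [ent_succ_eq, show pp - (pp - y) = y from by omega]
  have hold : ent C p ((p - (y + 1)) + 1) =
      colStep C (y + 1) (ent C p (p - (y + 1))) := by
    rw [ent_succ_eq, show p - (p - (y + 1)) = y + 1 from by omega]
  rw [show pp - (y - 1) = (pp - y) + 1 from by omega, hnew, hA1,
    colStep_congr _ (fun i => mem_QC_high h (by omega : j ≤ y)), ← hold,
    show p - (y + 1) + 1 = p - y from by omega]

/-- Exit relation across the entry column of pipe `j`. -/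
lemma colj_exit (h : Ctx n C M j) {p : ℕ} (hjp : j < p) :
    ent C p (p - (j - 1)) -
      (if ent C j 1 ≤ ent C p (p - (j - 1)) then 1 else 0) = ent C p (p - j) := by
  have hj1 := h.hj1
  set t := ent C p (p - j) with ht
  have htpos : 1 ≤ t := ent_pos h.hC1 (by omega)
  have hold : ent C p ((p - j) + 1) = colStep C j t := by
    rw [ent_succ_eq, show p - (p - j) = j from by omega]
  rw [show p - (j - 1) = (p - j) + 1 from by omega, hold]
  by_cases hmem : (t, j) ∈ C
  · rw [colStep, if_pos hmem]
    have := (h.colj t).mp hmem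
    rw [if_neg (by omega)]
    omega
  · rw [colStep, if_neg hmem]
    have htR : ent C j 1 ≤ t := by
      by_contra hcon
      exact hmem ((h.colj t).mpr ⟨htpos, by omega⟩)
    have hnb : nextB C j (t + 1) = t + 1 := by
      refine nextB_eq le_rfl (fun i h1 h2 => absurd h1 (by omega)) ?_
      intro hmem2
      have := (h.colj _).mp hmem2
      omega
    rw [hnb, if_pos (by omega)]
    omega

/-- Bridge step: crossing the deleted column `j` (case `j < p`; here `y = j - 1`). -/
lemma bridge_step (h : Ctx n C M j) {p pp : ℕ} (hjp : j < p) (hpp : pp = p - 1)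
    (hA2 : ent (QC n C j) pp (pp - (j + 1 - (if j < j + 1 then 1 else 0))) =
      ent C p (p - (j + 1)) -
        (if j + 1 < j ∧ ent C j (j - (j + 1)) ≤ ent C p (p - (j + 1)) then 1 else 0)) :
    ent (QC n C j) pp (pp - (j - 1 - (if j < j - 1 then 1 else 0))) =
      ent C p (p - (j - 1)) -
        (if j - 1 < j ∧ ent C j (j - (j - 1)) ≤ ent C p (p - (j - 1)) then 1 else 0) := by
  have hj1 := h.hj1
  rw [if_pos (show j < j + 1 by omega), if_neg (show ¬ (j + 1 < j ∧ _) from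
    fun hc => by omega), Nat.sub_zero, show j + 1 - 1 = j from rfl] at hA2
  rw [if_neg (show ¬ j < j - 1 by omega), Nat.sub_zero,
    show j - (j - 1) = 1 from by omega]
  -- one column step over the new column `j` (≅ old column `j + 1`)
  have hnew : ent (QC n C j) pp ((pp - j) + 1) =
      colStep (QC n C j) j (ent (QC n C j) pp (pp - j)) := by
    rw [ent_succ_eq, show pp - (pp - j) = j from by omega]
  have hold : ent C p ((p - (j + 1)) + 1) =
      colStep C (j + 1) (ent C p (p - (j + 1))) := by
    rw [ent_succ_eq, show p - (p - (j + 1)) = j + 1 from by omega]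
  have hbr : ent (QC n C j) pp (pp - (j - 1)) = ent C p (p - j) := by
    rw [show pp - (j - 1) = (pp - j) + 1 from by omega, hnew, hA2,
      colStep_congr _ (fun i => mem_QC_high h le_rfl), ← hold,
      show p - (j + 1) + 1 = p - j from by omega]
  rw [hbr, ← colj_exit h hjp]
  by_cases hcc : ent C j 1 ≤ ent C p (p - (j - 1))
  · rw [if_pos hcc, if_pos ⟨by omega, hcc⟩]
  · rw [if_neg hcc, if_neg (fun hc => hcc hc.2)]

/-- The main invariant: entry rows of the pipe (entering at old column `p ≠ j`)
in the reduced diagram, compared with the original diagram. -/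
lemma invariant (h : Ctx n C M j) {p : ℕ} (hp1 : 1 ≤ p) (hpn : p ≤ n) (hpj : p ≠ j) :
    ∀ y, y ≤ p → y ≠ j →
      ent (QC n C j) (p - (if j < p then 1 else 0))
          ((p - (if j < p then 1 else 0)) - (y - (if j < y then 1 else 0))) =
        ent C p (p - y) -
          (if y < j ∧ ent C j (j - y) ≤ ent C p (p - y) then 1 else 0) := by
  have hbase : ∀ y, y = p → y ≠ j →
      ent (QC n C j) (p - (if j < p then 1 else 0))
          ((p - (if j < p then 1 else 0)) - (y - (if j < y then 1 else 0))) =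
        ent C p (p - y) -
          (if y < j ∧ ent C j (j - y) ≤ ent C p (p - y) then 1 else 0) := by
    intro y hyp hyj
    rw [hyp, Nat.sub_self, ent_zero, Nat.sub_self, ent_zero]
    have hcond : ¬ (p < j ∧ ent C j (j - p) ≤ 0) := by
      rintro ⟨h1, h2⟩
      have := h.Rpos (d := j - p) (by omega)
      omega
    rw [if_neg hcond]
  have main : ∀ k y, y ≤ p → p - y ≤ k → y ≠ j →
      ent (QC n C j) (p - (if j < p then 1 else 0))
          ((p - (if j < p then 1 else 0)) - (y - (if j < y then 1 else 0))) =
        ent C p (p - y) -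
          (if y < j ∧ ent C j (j - y) ≤ ent C p (p - y) then 1 else 0) := by
    intro k
    induction k with
    | zero =>
      intro y hyp hk hyj
      exact hbase y (by omega) hyj
    | succ k ih =>
      intro y hyp hk hyj
      rcases Nat.eq_or_lt_of_le hyp with hyeq | hylt
      · exact hbase y hyeq hyj
      · by_cases hybj : y + 1 = j
        · have hjp : j < p := by omega
          have hA2 := ih (y + 2) (by omega) (by omega) (by omega)
          have hy : y = j - 1 := by omega
          subst hy
          refine bridge_step h hjp (by rw [if_pos hjp]) ?_
          rw [show j + 1 = j - 1 + 2 from by omega]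
          exact hA2
        · have hA1 := ih (y + 1) (by omega) (by omega) hybj
          by_cases hyltj : y + 1 < j
          · refine low_step h hpj hyltj (by omega) ?_ hA1
            by_cases hc : j < p
            · rw [if_pos hc]; omega
            · rw [if_neg hc]; omega
          · have hjy : j < y := by omega
            refine high_step h hjy (by omega) ?_ hA1
            by_cases hc : j < p
            · rw [if_pos hc]; omega
            · rw [if_neg hc]; omega
  exact fun y h1 h2 => main (p - y) y h1 le_rfl h2

end Invariant

section Transfers

variable {n : ℕ} {C M : Finset (ℕ × ℕ)} {j : ℕ}

/-- Upper entry: the next entry row of the new pipe, in terms of old data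
(valid also across the deleted column via `colj_exit`). -/
lemma EnU (h : Ctx n C M j) {p y : ℕ} (hp1 : 1 ≤ p) (hpn : p ≤ n) (hpj : p ≠ j)
    (hy1 : 1 ≤ y) (hyp : y ≤ p) (hyj : y ≠ j) :
    ent (QC n C j) (p - (if j < p then 1 else 0))
        ((p - (if j < p then 1 else 0)) - (y - (if j < y then 1 else 0)) + 1) =
      ent C p (p - y + 1) -
        (if y - 1 < j ∧ ent C j (j - y + 1) ≤ ent C p (p - y + 1) then 1 else 0) := by
  have hj1 := h.hj1
  by_cases hyj1 : y - 1 = j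
  · -- y = j + 1 (so j < p): cross the deleted column
    have hjp : j < p := by omega
    have hyy : y = j + 1 := by omega
    subst hyy
    have hinv := invariant h hp1 hpn hpj (j - 1) (by omega) (by omega)
    rw [if_neg (show ¬ j < j - 1 by omega), Nat.sub_zero,
      show j - (j - 1) = 1 from by omega] at hinv
    have hidx : (p - (if j < p then 1 else 0)) - (j - 1) =
        (p - (if j < p then 1 else 0)) - (j + 1 - (if j < j + 1 then 1 else 0)) + 1 := by
      rw [if_pos hjp, if_pos (show j < j + 1 by omega)]
      omega
    rw [hidx] at hinv
    have hce := colj_exit h hjp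
    rw [if_neg (show ¬ (j + 1 - 1 < j ∧
        ent C j (j - (j + 1) + 1) ≤ ent C p (p - (j + 1) + 1)) from fun hc => by omega),
      Nat.sub_zero, show p - (j + 1) + 1 = p - j from by omega, hinv, ← hce]
    by_cases hcc : ent C j 1 ≤ ent C p (p - (j - 1))
    · rw [if_pos ⟨by omega, hcc⟩, if_pos hcc]
    · rw [if_neg (fun hc => hcc hc.2), if_neg hcc]
  · have hinv := invariant h hp1 hpn hpj (y - 1) (by omega) hyj1
    have hidx : (p - (if j < p then 1 else 0)) - (y - 1 - (if j < y - 1 then 1 else 0)) =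
        (p - (if j < p then 1 else 0)) - (y - (if j < y then 1 else 0)) + 1 := by
      by_cases hc1 : j < y
      · have hc2 : j < y - 1 := by omega
        have hc3 : j < p := by omega
        rw [if_pos hc1, if_pos hc2, if_pos hc3]
        omega
      · have hc2 : ¬ j < y - 1 := by omega
        rw [if_neg hc1, if_neg hc2]
        by_cases hc3 : j < p
        · rw [if_pos hc3]; omega
        · rw [if_neg hc3]; omega
    rw [hidx, show p - (y - 1) = p - y + 1 from by omega] at hinv
    rw [hinv]
    by_cases hylt : y - 1 < j
    · rw [show j - (y - 1) = j - y + 1 from by omega]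
    · rw [if_neg (fun hc => absurd hc.1 hylt), if_neg (fun hc => absurd hc.1 hylt)]

/-- Transfer of condition (B): every crossing tile in the entry column of the old
pipe is traversed by it. -/
lemma transferB (h : Ctx n C M j) {p : ℕ} (hp1 : 1 ≤ p) (hpn : p ≤ n) (hpj : p ≠ j)
    (QB : ∀ i : ℕ, ((i, p - (if j < p then 1 else 0)) : ℕ × ℕ) ∈ QC n C j →
      pipePasses (QC n C j) (p - (if j < p then 1 else 0))
        (((i, p - (if j < p then 1 else 0)) : ℕ × ℕ), true) ∨
      pipePasses (QC n C j) (p - (if j < p then 1 else 0))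
        (((i, p - (if j < p then 1 else 0)) : ℕ × ℕ), false))
    (QCm : ∀ i : ℕ, ((i, p - (if j < p then 1 else 0)) : ℕ × ℕ) ∉ QM n C M j) :
    ∀ i : ℕ, (i, p) ∈ C → pipePasses C p (((i, p) : ℕ × ℕ), true) := by
  intro i hmem
  have hj1 := h.hj1
  set pp := p - (if j < p then 1 else 0) with hppdef
  have hi1 : 1 ≤ i := h.hC1 _ hmem
  have hisum : i + p ≤ n := h.hCs _ hmem
  have hpp1 : 1 ≤ pp := by
    rw [hppdef]; by_cases hc : j < p
    · rw [if_pos hc]; omega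
    · rw [if_neg hc]; omega
  have hQ1 : ∀ t ∈ QC n C j, 1 ≤ t.1 := QC_row_pos
  have hgoal : i ≤ ent C p 1 → pipePasses C p (((i, p) : ℕ × ℕ), true) := by
    intro hle
    rw [trav_true_iff h.hC1 (by omega)]
    refine ⟨by omega, le_rfl, ?_, ?_⟩
    · rw [Nat.sub_self, ent_zero]; omega
    · rw [Nat.sub_self]; exact hle
  have hQmem : ∀ i', 1 ≤ i' → ((i', pp) : ℕ × ℕ) ∈ QC n C j →
      i' ≤ ent (QC n C j) pp 1 := by
    intro i' hi'1 hmem'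
    rcases QB i' hmem' with ht | hf
    · rw [trav_true_iff hQ1 hpp1] at ht
      obtain ⟨-, -, -, h4⟩ := ht
      rw [Nat.sub_self] at h4
      exact h4
    · rw [trav_false_iff hQ1 hpp1] at hf
      omega
  by_cases hjp : j < p
  · have hpp_eq : pp = p - 1 := by rw [hppdef, if_pos hjp]
    have hEn1 : ent (QC n C j) pp 1 = ent C p 1 := by
      have hE := EnU h hp1 hpn hpj (y := p) (by omega) le_rfl (by omega)
      rw [if_pos hjp, Nat.sub_self, Nat.sub_self, Nat.zero_add,
        if_neg (show ¬ (p - 1 < j ∧ ent C j (j - p + 1) ≤ ent C p 1) from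
          fun hc => by omega), Nat.sub_zero] at hE
      rw [hppdef, if_pos hjp]
      exact hE
    apply hgoal
    have hnew : ((i, pp) : ℕ × ℕ) ∈ QC n C j := by
      rw [hpp_eq, mem_QC_high h (by omega), show p - 1 + 1 = p from by omega]
      exact hmem
    have hle := hQmem i hi1 hnew
    rw [hEn1] at hle
    exact hle
  · have hpj' : p < j := by omega
    have hpp_eq : pp = p := by rw [hppdef, if_neg hjp, Nat.sub_zero]
    set X := ent C p 1 with hX
    set rr := ent C j (j - p + 1) with hrr
    set r0 := ent C j (j - p) with hr0
    have hXpos : 1 ≤ X := ent_one_pos h.hC1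
    have hXnm : (X, p) ∉ C := by rw [hX, ent_one_eq h.hC1]; exact nextB_not_mem _ _
    have hr0pos : 1 ≤ r0 := h.Rpos (by omega)
    have hrrr0 : r0 ≤ rr ∧ rr ≤ r0 + 1 := by
      constructor
      · rw [hrr, hr0, show j - p + 1 = (j - p) + 1 from rfl]
        exact ent_le_succ _
      · rcases h.Rstep (d := j - p) (by omega) (by omega) with ⟨-, h2⟩ | ⟨-, h2, -⟩ <;>
          rw [hrr, hr0, show j - p + 1 = (j - p) + 1 from rfl, h2] <;> omega
    have hEn1 : ent (QC n C j) pp 1 = X - (if rr ≤ X then 1 else 0) := by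
      have hE := EnU h hp1 hpn hpj (y := p) (by omega) le_rfl (by omega)
      rw [if_neg hjp, Nat.sub_zero, Nat.sub_self, Nat.zero_add] at hE
      rw [hppdef, if_neg hjp, Nat.sub_zero]
      rw [hE]
      by_cases hcc : ent C j (j - p + 1) ≤ ent C p 1
      · rw [if_pos ⟨by omega, hcc⟩, if_pos (show rr ≤ X from hcc)]
      · rw [if_neg (fun hc => hcc hc.2), if_neg (show ¬ rr ≤ X from hcc)]
    have hcase := h.Rstep (d := j - p) (by omega) (by omega)
    rw [show j - (j - p) = p from by omega] at hcase
    apply hgoal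
    rcases lt_trichotomy i rr with hilt | hieq | higt
    · -- tile survives unshifted
      have hnew : ((i, pp) : ℕ × ℕ) ∈ QC n C j := by
        rw [hpp_eq, mem_QC_low h (by omega) hpj', ← hrr,
          if_neg (show ¬ rr ≤ i by omega), Nat.add_zero]
        exact hmem
      have hle := hQmem i hi1 hnew
      rw [hEn1] at hle
      by_cases hrX : rr ≤ X
      · rw [if_pos hrX] at hle; omega
      · rw [if_neg hrX] at hle; omega
    · -- i = rr : the deleted row (pipe-j crossing)
      rcases hcase with ⟨hmemr, hsucc⟩ | ⟨hnm, hsucc, hnm2⟩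
      · -- crossing case : rr = r0, (r0, p) ∈ C
        have hrr0 : rr = r0 := by
          rw [hrr, hr0, show j - p + 1 = (j - p) + 1 from rfl, hsucc]
        have hjpass : pipePasses C j (((r0, p) : ℕ × ℕ), false) := h.passes_entry hpj'
        rcases Nat.lt_or_ge r0 X with hx | hx
        · omega
        · exfalso
          have hXr0 : X ≠ r0 := fun he => hXnm (by rw [he]; exact hmemr)
          rcases Nat.lt_or_ge r0 2 with hh | hh
          · -- r0 = 1 = X : contradiction with (X,p) ∉ C
            exact hXnm (by rw [show X = r0 from by omega]; exact hmemr)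
          · have habove := h.rawD _ hmem
              (Or.inr (by rw [show i = r0 from by omega]; exact hjpass)) (by omega)
            rcases habove with hup | hup
            · have hnew : ((i - 1, pp) : ℕ × ℕ) ∈ QC n C j := by
                rw [hpp_eq, mem_QC_low h (by omega) hpj', ← hrr,
                  if_neg (show ¬ rr ≤ i - 1 by omega), Nat.add_zero]
                exact hup
              have hle := hQmem (i - 1) (by omega) hnew
              rw [hEn1, if_neg (by omega)] at hle
              exact hXnm (by rw [show X = i - 1 from by omega]; exact hup)
            · have hnew : ((i - 1, pp) : ℕ × ℕ) ∈ QM n C M j := by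
                rw [hpp_eq, mem_QM_iff]
                constructor
                · rw [staircase_mem_iff]
                  exact ⟨by omega, by omega, by omega⟩
                · rw [oldPos_low h (by omega) hpj', ← hrr,
                    if_neg (show ¬ rr ≤ i - 1 by omega), Nat.add_zero]
                  exact hup
              exact absurd hnew (QCm (i - 1))
      · -- bump case : (rr, p) ∉ C contradicts the crossing
        exfalso
        have : rr = r0 + 1 := by
          rw [hrr, hr0, show j - p + 1 = (j - p) + 1 from rfl, hsucc]
        exact hnm2 (by rw [show r0 + 1 = i from by omega]; exact hmem)
    · -- i > rr : shifted tile
      have hnew : ((i - 1, pp) : ℕ × ℕ) ∈ QC n C j := by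
        rw [hpp_eq, mem_QC_low h (by omega) hpj', ← hrr,
          if_pos (show rr ≤ i - 1 by omega), show i - 1 + 1 = i from by omega]
        exact hmem
      have hle := hQmem (i - 1) (by omega) hnew
      rw [hEn1] at hle
      by_cases hrX : rr ≤ X
      · rw [if_pos hrX] at hle; omega
      · rw [if_neg hrX] at hle; omega

end Transfers

section Transfers2

variable {n : ℕ} {C M : Finset (ℕ × ℕ)} {j : ℕ}

/-- In a column `y < j`, the two pipe-`j` rows `r = ent C j (j-y)` (entry) and
`rb = ent C j (j-y+1)` (exit) satisfy `r ≤ rb ≤ r + 1`. -/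
lemma rb_bounds (h : Ctx n C M j) {y : ℕ} (hy1 : 1 ≤ y) (hyj : y < j) :
    ent C j (j - y) ≤ ent C j (j - y + 1) ∧
      ent C j (j - y + 1) ≤ ent C j (j - y) + 1 := by
  constructor
  · rw [show j - y + 1 = (j - y) + 1 from rfl]
    exact ent_le_succ _
  · rcases h.Rstep (d := j - y) (by omega) (by omega) with ⟨-, h2⟩ | ⟨-, h2, -⟩ <;>
      rw [show j - y + 1 = (j - y) + 1 from rfl, h2] <;> omega

/-- If `a` avoids both pipe-`j` rows, the two possible shift conventions agree. -/
lemma shift_eq (h : Ctx n C M j) {y a : ℕ} (hy1 : 1 ≤ y) (hyj : y < j)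
    (har : a ≠ ent C j (j - y)) (harb : a ≠ ent C j (j - y + 1)) :
    (if ent C j (j - y + 1) ≤ a then 1 else 0) =
      (if ent C j (j - y) ≤ a then 1 else 0) := by
  obtain ⟨h1, h2⟩ := rb_bounds h hy1 hyj
  by_cases hc1 : ent C j (j - y + 1) ≤ a <;> by_cases hc2 : ent C j (j - y) ≤ a <;>
    first
    | (rw [if_pos hc1, if_pos hc2])
    | (rw [if_neg hc1, if_neg hc2])
    | (exfalso; omega)

/-- If pipe `j` bumps in column `y` then it traverses the tile `(rb, y)` from the top. -/
lemma passes_second_bump (h : Ctx n C M j) {y : ℕ} (hy1 : 1 ≤ y) (hyj : y < j)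
    (hne : ent C j (j - y + 1) ≠ ent C j (j - y)) :
    pipePasses C j ((ent C j (j - y + 1), y), true) := by
  rw [trav_true_iff h.hC1 h.hj1]
  obtain ⟨h1, -⟩ := rb_bounds h hy1 hyj
  exact ⟨hy1, by omega, by omega, le_rfl⟩

/-- Mapping a marked tile off pipe `j` into the reduced diagram. -/
lemma mapQM (h : Ctx n C M j) {y a : ℕ} (hy1 : 1 ≤ y) (hyj : y < j)
    (hmem : (a, y) ∈ M) (har : a ≠ ent C j (j - y)) (harb : a ≠ ent C j (j - y + 1))
    (hsumn : a - (if ent C j (j - y + 1) ≤ a then 1 else 0) + y ≤ n) :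
    ((a - (if ent C j (j - y + 1) ≤ a then 1 else 0), y) : ℕ × ℕ) ∈ QM n C M j := by
  have ha1 : 1 ≤ a := (h.hM _ hmem).1
  have hrbpos : 1 ≤ ent C j (j - y + 1) := h.Rpos (by omega)
  rw [mem_QM_iff]
  constructor
  · rw [staircase_mem_iff]
    refine ⟨?_, by omega, by omega⟩
    by_cases hc : ent C j (j - y + 1) ≤ a
    · rw [if_pos hc]; omega
    · rw [if_neg hc]; omega
  · rw [oldPos_low h hy1 hyj]
    by_cases hc : ent C j (j - y + 1) ≤ a
    · rw [if_pos hc, if_pos (show ent C j (j - y + 1) ≤ a - 1 by omega),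
        show a - 1 + 1 = a from by omega]
      exact hmem
    · rw [if_neg hc, Nat.sub_zero, if_neg hc, Nat.add_zero]
      exact hmem

/-- Transfer of condition on markings in the entry column. -/
lemma transferC (h : Ctx n C M j) {p : ℕ} (hp1 : 1 ≤ p) (hpn : p ≤ n) (hpj : p ≠ j)
    (QCm : ∀ i : ℕ, ((i, p - (if j < p then 1 else 0)) : ℕ × ℕ) ∉ QM n C M j) :
    ∀ i : ℕ, (i, p) ∉ M := by
  intro i hmem
  have hj1 := h.hj1
  have hi1 : 1 ≤ i := (h.hM _ hmem).1
  have hisum : i + p ≤ n + 1 := (h.hM _ hmem).2.2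
  by_cases hjp : j < p
  · refine QCm i ?_
    rw [if_pos hjp, mem_QM_iff]
    constructor
    · rw [staircase_mem_iff]
      exact ⟨by omega, by omega, by omega⟩
    · rw [oldPos_high (show j ≤ p - 1 by omega), show p - 1 + 1 = p from by omega]
      exact hmem
  · have hpj' : p < j := by omega
    have hr0pos : 1 ≤ ent C j (j - p) := h.Rpos (by omega)
    have hsum0 : ent C j (j - p) + p ≤ n + 1 := by
      have := h.Rsum (d := j - p) (by omega)
      rwa [show j - (j - p) = p from by omega] at this
    have hir0 : i ≠ ent C j (j - p) := by
      intro he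
      exact (h.rawE _ hmem).2 (by rw [he]; exact h.passes_entry hpj')
    have hirr : i ≠ ent C j (j - p + 1) := by
      intro he
      obtain ⟨hb1, hb2⟩ := rb_bounds h (by omega) hpj'
      have hne2 : ent C j (j - p + 1) ≠ ent C j (j - p) := by omega
      exact (h.rawE _ hmem).1 (by rw [he]; exact passes_second_bump h (by omega) hpj' hne2)
    obtain ⟨hb1, hb2⟩ := rb_bounds h (by omega) hpj'
    have hsumn : i - (if ent C j (j - p + 1) ≤ i then 1 else 0) + p ≤ n := by
      by_cases hc : ent C j (j - p + 1) ≤ i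
      · rw [if_pos hc]; omega
      · rw [if_neg hc]; omega
    have hnew := mapQM h (by omega) hpj' hmem hir0 hirr hsumn
    refine absurd hnew ?_
    have := QCm (i - (if ent C j (j - p + 1) ≤ i then 1 else 0))
    rwa [if_neg hjp, Nat.sub_zero] at this

end Transfers2

section Transfers3

variable {n : ℕ} {C M : Finset (ℕ × ℕ)} {j : ℕ}

/-- Transfer of condition (E): the old pipe traverses no marked tile. -/
lemma transferE (h : Ctx n C M j) {p : ℕ} (hp1 : 1 ≤ p) (hpn : p ≤ n) (hpj : p ≠ j)
    (QE : ∀ t ∈ QM n C M j,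
      ¬ pipePasses (QC n C j) (p - (if j < p then 1 else 0)) (t, true) ∧
      ¬ pipePasses (QC n C j) (p - (if j < p then 1 else 0)) (t, false)) :
    ∀ t ∈ M, ¬ pipePasses C p (t, true) ∧ ¬ pipePasses C p (t, false) := by
  rintro ⟨a, y⟩ hmem
  have hj1 := h.hj1
  have ha1 : 1 ≤ a := (h.hM _ hmem).1
  have hy1 : 1 ≤ y := (h.hM _ hmem).2.1
  have hsum : a + y ≤ n + 1 := (h.hM _ hmem).2.2
  have hpp1 : 1 ≤ p - (if j < p then 1 else 0) := by
    by_cases hc : j < p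
    · rw [if_pos hc]; omega
    · rw [if_neg hc]; omega
  have hQ1 : ∀ t ∈ QC n C j, 1 ≤ t.1 := QC_row_pos
  by_cases hyj : y = j
  · subst hyj
    exact absurd hmem (h.rawCm a)
  by_cases hygt : j < y
  · constructor
    · intro htrav
      rw [trav_true_iff h.hC1 (by omega)] at htrav
      obtain ⟨-, hyp, hlow, hhigh⟩ := htrav
      have hjp : j < p := by omega
      have hnew : ((a, y - 1) : ℕ × ℕ) ∈ QM n C M j := by
        rw [mem_QM_iff]
        refine ⟨staircase_mem_iff.mpr ⟨by omega, by omega, by omega⟩, ?_⟩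
        rw [oldPos_high (show j ≤ y - 1 by omega), show y - 1 + 1 = y from by omega]
        exact hmem
      refine (QE _ hnew).1 ?_
      rw [trav_true_iff hQ1 hpp1]
      refine ⟨by omega, ?_, ?_, ?_⟩
      · rw [if_pos hjp]; omega
      · have hA := invariant h hp1 hpn hpj y hyp hyj
        rw [if_pos hygt, if_neg (show ¬ (y < j ∧ ent C j (j - y) ≤ ent C p (p - y))
          from fun hc => by omega), Nat.sub_zero] at hA
        rw [hA]
        exact hlow
      · have hE := EnU h hp1 hpn hpj (y := y) hy1 hyp hyj
        rw [if_pos hygt, if_neg (show ¬ (y - 1 < j ∧ ent C j (j - y + 1) ≤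
          ent C p (p - y + 1)) from fun hc => by omega), Nat.sub_zero] at hE
        rw [hE]
        exact hhigh
    · intro htrav
      rw [trav_false_iff h.hC1 (by omega)] at htrav
      obtain ⟨hyp, ha⟩ := htrav
      have hjp : j < p := by omega
      have hnew : ((a, y - 1) : ℕ × ℕ) ∈ QM n C M j := by
        rw [mem_QM_iff]
        refine ⟨staircase_mem_iff.mpr ⟨by omega, by omega, by omega⟩, ?_⟩
        rw [oldPos_high (show j ≤ y - 1 by omega), show y - 1 + 1 = y from by omega]
        exact hmem
      refine (QE _ hnew).2 ?_
      rw [trav_false_iff hQ1 hpp1]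
      constructor
      · rw [if_pos hjp]; omega
      · have hA := invariant h hp1 hpn hpj y (by omega) hyj
        rw [if_pos hygt, if_neg (show ¬ (y < j ∧ ent C j (j - y) ≤ ent C p (p - y))
          from fun hc => by omega), Nat.sub_zero] at hA
        rw [hA]
        exact ha
  · have hylt : y < j := by omega
    obtain ⟨hb1, hb2⟩ := rb_bounds h hy1 hylt
    have hrpos : 1 ≤ ent C j (j - y) := h.Rpos (by omega)
    constructor
    · intro htrav
      rw [trav_true_iff h.hC1 (by omega)] at htrav
      obtain ⟨-, hyp, hlow, hhigh⟩ := htrav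
      by_cases har : a = ent C j (j - y)
      · exact (h.rawE _ hmem).2 (by rw [har]; exact h.passes_entry hylt)
      by_cases harb : a = ent C j (j - y + 1)
      · have hne2 : ent C j (j - y + 1) ≠ ent C j (j - y) := by omega
        exact (h.rawE _ hmem).1 (by rw [harb]; exact passes_second_bump h hy1 hylt hne2)
      have hsumn : a - (if ent C j (j - y + 1) ≤ a then 1 else 0) + y ≤ n := by
        by_cases hc : ent C j (j - y + 1) ≤ a
        · rw [if_pos hc]; omega
        · rw [if_neg hc]
          rcases Nat.lt_or_ge (a + y) (n + 1) with hb | hb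
          · omega
          · exfalso
            have hrbsum : ent C j (j - y + 1) + (y - 1) ≤ n + 1 := by
              have := h.Rsum (d := j - y + 1) (by omega)
              rwa [show j - (j - y + 1) = y - 1 from by omega] at this
            have hrba : ent C j (j - y + 1) = a + 1 := by omega
            rcases h.Rstep (d := j - y) (by omega) (by omega) with ⟨hm2, h2⟩ | ⟨-, h2, -⟩
            · rw [show j - (j - y) = y from by omega] at hm2
              have hcs := h.hCs _ hm2
              simp only at hcs
              have h2' : ent C j (j - y + 1) = ent C j (j - y) := by
                rw [show j - y + 1 = (j - y) + 1 from rfl, h2]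
              omega
            · have h2' : ent C j (j - y + 1) = ent C j (j - y) + 1 := by
                rw [show j - y + 1 = (j - y) + 1 from rfl, h2]
              omega
      have hnew := mapQM h hy1 hylt hmem har harb hsumn
      refine (QE _ hnew).1 ?_
      rw [trav_true_iff hQ1 hpp1]
      have hA := invariant h hp1 hpn hpj y hyp hyj
      rw [if_neg (show ¬ j < y by omega), Nat.sub_zero] at hA
      have hE := EnU h hp1 hpn hpj (y := y) hy1 hyp hyj
      rw [if_neg (show ¬ j < y by omega), Nat.sub_zero] at hE
      refine ⟨by omega, ?_, ?_, ?_⟩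
      · by_cases hc : j < p
        · rw [if_pos hc]; omega
        · rw [if_neg hc]; omega
      · rw [hA]
        by_cases hc1 : ent C j (j - y + 1) ≤ a <;>
          by_cases hc2 : ent C j (j - y) ≤ ent C p (p - y)
        · rw [if_pos hc1, if_pos ⟨hylt, hc2⟩]; omega
        · rw [if_pos hc1, if_neg (fun hq => hc2 hq.2)]; omega
        · rw [if_neg hc1, if_pos ⟨hylt, hc2⟩]; omega
        · rw [if_neg hc1, if_neg (fun hq => hc2 hq.2)]; omega
      · rw [hE]
        by_cases hc1 : ent C j (j - y + 1) ≤ a <;>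
          by_cases hc2 : ent C j (j - y + 1) ≤ ent C p (p - y + 1)
        · rw [if_pos hc1, if_pos ⟨by omega, hc2⟩]; omega
        · rw [if_pos hc1, if_neg (fun hq => hc2 hq.2)]; omega
        · rw [if_neg hc1, if_pos ⟨by omega, hc2⟩]; omega
        · rw [if_neg hc1, if_neg (fun hq => hc2 hq.2)]; omega
    · intro htrav
      rw [trav_false_iff h.hC1 (by omega)] at htrav
      obtain ⟨hyp, ha⟩ := htrav
      have har : a ≠ ent C j (j - y) := by
        rw [ha]
        exact ent_ne h.hC1 (by omega) hj1 hpj hy1 hyp hylt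
      by_cases harb : a = ent C j (j - y + 1)
      · have hne2 : ent C j (j - y + 1) ≠ ent C j (j - y) := by omega
        exact (h.rawE _ hmem).1 (by rw [harb]; exact passes_second_bump h hy1 hylt hne2)
      have hsumn : a - (if ent C j (j - y + 1) ≤ a then 1 else 0) + y ≤ n := by
        by_cases hc : ent C j (j - y + 1) ≤ a
        · rw [if_pos hc]; omega
        · rw [if_neg hc]
          have := h.Rsum (d := j - y) (by omega)
          rw [show j - (j - y) = y from by omega] at this
          omega
      have hnew := mapQM h hy1 hylt hmem har harb hsumn
      refine (QE _ hnew).2 ?_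
      rw [trav_false_iff hQ1 hpp1]
      have hA := invariant h hp1 hpn hpj y (by omega) hyj
      rw [if_neg (show ¬ j < y by omega), Nat.sub_zero] at hA
      have hshift := shift_eq h hy1 hylt har harb
      constructor
      · by_cases hc : j < p
        · rw [if_pos hc]; omega
        · rw [if_neg hc]; omega
      · rw [hA, ← ha, hshift]
        by_cases hc1 : ent C j (j - y) ≤ a
        · rw [if_pos hc1, if_pos ⟨hylt, hc1⟩]
        · rw [if_neg hc1, if_neg (fun hq => hc1 hq.2)]

end Transfers3

section Transfers4

variable {n : ℕ} {C M : Finset (ℕ × ℕ)} {j : ℕ}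

/-- Mapping a crossing tile off pipe `j` into the reduced diagram. -/
lemma mapQC (h : Ctx n C M j) {y a : ℕ} (hy1 : 1 ≤ y) (hyj : y < j)
    (hmem : (a, y) ∈ C) (harb : a ≠ ent C j (j - y + 1)) :
    ((a - (if ent C j (j - y + 1) ≤ a then 1 else 0), y) : ℕ × ℕ) ∈ QC n C j := by
  rw [mem_QC_low h hy1 hyj]
  by_cases hc : ent C j (j - y + 1) ≤ a
  · rw [if_pos hc, if_pos (show ent C j (j - y + 1) ≤ a - 1 by omega),
      show a - 1 + 1 = a from by omega]
    exact hmem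
  · rw [if_neg hc, Nat.sub_zero, if_neg hc, Nat.add_zero]
    exact hmem

/-- Transfer of condition (D): above any crossing traversed by the old pipe sits
a crossing or a marked tile. -/
lemma transferD (h : Ctx n C M j) {p : ℕ} (hp1 : 1 ≤ p) (hpn : p ≤ n) (hpj : p ≠ j)
    (QD : ∀ t ∈ QC n C j,
      (pipePasses (QC n C j) (p - (if j < p then 1 else 0)) (t, true) ∨
       pipePasses (QC n C j) (p - (if j < p then 1 else 0)) (t, false)) →
      2 ≤ t.1 → ((t.1 - 1, t.2) ∈ QC n C j ∨ (t.1 - 1, t.2) ∈ QM n C M j)) :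
    ∀ t ∈ C, (pipePasses C p (t, true) ∨ pipePasses C p (t, false)) → 2 ≤ t.1 →
      ((t.1 - 1, t.2) ∈ C ∨ (t.1 - 1, t.2) ∈ M) := by
  rintro ⟨a, y⟩ hmem htrav ha2
  simp only at ha2 ⊢
  have hj1 := h.hj1
  have ha1 : 1 ≤ a := h.hC1 _ hmem
  have hy1 : 1 ≤ y := h.hC2 _ hmem
  have hsum : a + y ≤ n := h.hCs _ hmem
  have hpp1 : 1 ≤ p - (if j < p then 1 else 0) := by
    by_cases hc : j < p
    · rw [if_pos hc]; omega
    · rw [if_neg hc]; omega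
  have hQ1 : ∀ t ∈ QC n C j, 1 ≤ t.1 := QC_row_pos
  -- basic consequences of the traversal
  have hyp : y ≤ p := by
    rcases htrav with ht | hf
    · rw [trav_true_iff h.hC1 (by omega)] at ht; exact ht.2.1
    · rw [trav_false_iff h.hC1 (by omega)] at hf; omega
  by_cases hyj : y = j
  · -- entry column of pipe j
    subst hyj
    left
    have := (h.colj a).mp hmem
    exact (h.colj (a - 1)).mpr ⟨by omega, by omega⟩
  by_cases hygt : j < y
  · -- plain shifted column
    have hjp : j < p := by omega
    have hnew : ((a, y - 1) : ℕ × ℕ) ∈ QC n C j := by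
      rw [mem_QC_high h (by omega), show y - 1 + 1 = y from by omega]
      exact hmem
    have htravQ : pipePasses (QC n C j) (p - (if j < p then 1 else 0))
          (((a, y - 1) : ℕ × ℕ), true) ∨
        pipePasses (QC n C j) (p - (if j < p then 1 else 0))
          (((a, y - 1) : ℕ × ℕ), false) := by
      rcases htrav with ht | hf
      · left
        rw [trav_true_iff h.hC1 (by omega)] at ht
        obtain ⟨-, -, hlow, hhigh⟩ := ht
        rw [trav_true_iff hQ1 hpp1]
        refine ⟨by omega, by rw [if_pos hjp]; omega, ?_, ?_⟩
        · have hA := invariant h hp1 hpn hpj y hyp hyj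
          rw [if_pos hygt, if_neg (show ¬ (y < j ∧ ent C j (j - y) ≤ ent C p (p - y))
            from fun hc => by omega), Nat.sub_zero] at hA
          rw [hA]; exact hlow
        · have hE := EnU h hp1 hpn hpj (y := y) hy1 hyp hyj
          rw [if_pos hygt, if_neg (show ¬ (y - 1 < j ∧ ent C j (j - y + 1) ≤
            ent C p (p - y + 1)) from fun hc => by omega), Nat.sub_zero] at hE
          rw [hE]; exact hhigh
      · right
        rw [trav_false_iff h.hC1 (by omega)] at hf
        obtain ⟨hyp', ha⟩ := hf
        rw [trav_false_iff hQ1 hpp1]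
        constructor
        · rw [if_pos hjp]; omega
        · have hA := invariant h hp1 hpn hpj y hyp hyj
          rw [if_pos hygt, if_neg (show ¬ (y < j ∧ ent C j (j - y) ≤ ent C p (p - y))
            from fun hc => by omega), Nat.sub_zero] at hA
          rw [hA]; exact ha
    rcases QD _ hnew htravQ (by omega) with hup | hup
    · left
      rw [mem_QC_high h (by omega), show y - 1 + 1 = y from by omega] at hup
      exact hup
    · right
      rw [mem_QM_iff, oldPos_high (show j ≤ y - 1 by omega),
        show y - 1 + 1 = y from by omega] at hup
      exact hup.2
  · -- y < j
    have hylt : y < j := by omega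
    obtain ⟨hb1, hb2⟩ := rb_bounds h hy1 hylt
    have hrpos : 1 ≤ ent C j (j - y) := h.Rpos (by omega)
    have hstep := h.Rstep (d := j - y) (by omega) (by omega)
    rw [show j - (j - y) = y from by omega] at hstep
    have hsteprb : ent C j ((j - y) + 1) = ent C j (j - y + 1) := rfl
    by_cases harb : a = ent C j (j - y + 1)
    · -- the deleted row
      rcases hstep with ⟨hm2, h2⟩ | ⟨hm2, h2, h3⟩
      · -- crossing case: tile of pipe j; use rawD directly
        have hpassj : pipePasses C j (((a, y) : ℕ × ℕ), false) := by
          rw [show a = ent C j (j - y) from by rw [harb, ← hsteprb, h2]]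
          exact h.passes_entry hylt
        exact h.rawD _ hmem (Or.inr hpassj) (by omega)
      · -- bump case: (rb, y) ∉ C, contradiction
        exfalso
        rw [hsteprb] at h2
        exact h3 (by rw [show ent C j (j - y) + 1 = a from by omega]; exact hmem)
    by_cases har : a = ent C j (j - y)
    · -- the entry row of pipe j in this column: must be a crossing of pipe j
      exfalso
      rcases hstep with ⟨hm2, h2⟩ | ⟨hm2, h2, h3⟩
      · rw [hsteprb] at h2; omega
      · exact hm2 (by rw [← har]; exact hmem)
    -- generic tile off pipe j
    have hTmem := mapQC h hy1 hylt hmem harb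
    have hA := invariant h hp1 hpn hpj y hyp hyj
    rw [if_neg (show ¬ j < y by omega), Nat.sub_zero] at hA
    have hE := EnU h hp1 hpn hpj (y := y) hy1 hyp hyj
    rw [if_neg (show ¬ j < y by omega), Nat.sub_zero] at hE
    have hshift := shift_eq h hy1 hylt har harb
    have hTtrav : pipePasses (QC n C j) (p - (if j < p then 1 else 0))
          (((a - (if ent C j (j - y + 1) ≤ a then 1 else 0), y) : ℕ × ℕ), true) ∨
        pipePasses (QC n C j) (p - (if j < p then 1 else 0))
          (((a - (if ent C j (j - y + 1) ≤ a then 1 else 0), y) : ℕ × ℕ), false) := by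
      rcases htrav with ht | hf
      · left
        rw [trav_true_iff h.hC1 (by omega)] at ht
        obtain ⟨-, -, hlow, hhigh⟩ := ht
        rw [trav_true_iff hQ1 hpp1]
        refine ⟨by omega, ?_, ?_, ?_⟩
        · by_cases hc : j < p
          · rw [if_pos hc]; omega
          · rw [if_neg hc]; omega
        · rw [hA]
          by_cases hc1 : ent C j (j - y + 1) ≤ a <;>
            by_cases hc2 : ent C j (j - y) ≤ ent C p (p - y)
          · rw [if_pos hc1, if_pos ⟨hylt, hc2⟩]; omega
          · rw [if_pos hc1, if_neg (fun hq => hc2 hq.2)]; omega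
          · rw [if_neg hc1, if_pos ⟨hylt, hc2⟩]; omega
          · rw [if_neg hc1, if_neg (fun hq => hc2 hq.2)]; omega
        · rw [hE]
          by_cases hc1 : ent C j (j - y + 1) ≤ a <;>
            by_cases hc2 : ent C j (j - y + 1) ≤ ent C p (p - y + 1)
          · rw [if_pos hc1, if_pos ⟨by omega, hc2⟩]; omega
          · rw [if_pos hc1, if_neg (fun hq => hc2 hq.2)]; omega
          · rw [if_neg hc1, if_pos ⟨by omega, hc2⟩]; omega
          · rw [if_neg hc1, if_neg (fun hq => hc2 hq.2)]; omega
      · right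
        rw [trav_false_iff h.hC1 (by omega)] at hf
        obtain ⟨hyp', ha⟩ := hf
        rw [trav_false_iff hQ1 hpp1]
        constructor
        · by_cases hc : j < p
          · rw [if_pos hc]; omega
          · rw [if_neg hc]; omega
        · rw [hA, ← ha, hshift]
          by_cases hc1 : ent C j (j - y) ≤ a
          · rw [if_pos hc1, if_pos ⟨hylt, hc1⟩]
          · rw [if_neg hc1, if_neg (fun hq => hc1 hq.2)]
    -- small-row special case
    by_cases hasmall : a - (if ent C j (j - y + 1) ≤ a then 1 else 0) < 2
    · -- forces a = 2, rb = 1, r = 1, crossing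
      have hc1 : ent C j (j - y + 1) ≤ a := by
        by_contra hc
        rw [if_neg hc] at hasmall
        omega
      rw [if_pos hc1] at hasmall
      have hrb1 : ent C j (j - y + 1) = 1 := by omega
      have hr1 : ent C j (j - y) = 1 := by omega
      rcases hstep with ⟨hm2, -⟩ | ⟨-, h2, -⟩
      · left
        rw [show a - 1 = ent C j (j - y) from by omega]
        exact hm2
      · exfalso
        rw [hsteprb] at h2
        omega
    -- the tile directly above the deleted row
    by_cases hrbup : ent C j (j - y + 1) ≤ a ∧ ent C j (j - y + 1) = a - 1
    · obtain ⟨hc1, hrba⟩ := hrbup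
      rcases hstep with ⟨hm2, h2⟩ | ⟨hm2, h2, h3⟩
      · -- crossing: above tile is pipe-j's crossing
        left
        rw [hsteprb] at h2
        rw [show a - 1 = ent C j (j - y) from by omega]
        exact hm2
      · -- bump: contradiction via QD
        exfalso
        rw [hsteprb] at h2
        rw [if_pos hc1] at hTmem hTtrav
        rcases QD _ hTmem hTtrav (by omega) with hup | hup
        · rw [mem_QC_low h hy1 hylt,
            if_neg (show ¬ ent C j (j - y + 1) ≤ a - 1 - 1 by omega),
            Nat.add_zero, show a - 1 - 1 = ent C j (j - y) from by omega] at hup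
          exact hm2 hup
        · rw [mem_QM_iff, oldPos_low h hy1 hylt,
            if_neg (show ¬ ent C j (j - y + 1) ≤ a - 1 - 1 by omega),
            Nat.add_zero, show a - 1 - 1 = ent C j (j - y) from by omega] at hup
          exact (h.rawE _ hup.2).2 (h.passes_entry hylt)
    · -- generic: map the answer of QD back
      rcases QD _ hTmem hTtrav (by omega) with hup | hup
      · left
        by_cases hc1 : ent C j (j - y + 1) ≤ a
        · rw [if_pos hc1] at hup
          rw [mem_QC_low h hy1 hylt,
            if_pos (show ent C j (j - y + 1) ≤ a - 1 - 1 by omega),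
            show a - 1 - 1 + 1 = a - 1 from by omega] at hup
          exact hup
        · rw [if_neg hc1, Nat.sub_zero] at hup
          rw [mem_QC_low h hy1 hylt,
            if_neg (show ¬ ent C j (j - y + 1) ≤ a - 1 by omega),
            Nat.add_zero] at hup
          exact hup
      · right
        by_cases hc1 : ent C j (j - y + 1) ≤ a
        · rw [if_pos hc1] at hup
          rw [mem_QM_iff, oldPos_low h hy1 hylt,
            if_pos (show ent C j (j - y + 1) ≤ a - 1 - 1 by omega),
            show a - 1 - 1 + 1 = a - 1 from by omega] at hup
          exact hup.2
        · rw [if_neg hc1, Nat.sub_zero] at hup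
          rw [mem_QM_iff, oldPos_low h hy1 hylt,
            if_neg (show ¬ ent C j (j - y + 1) ≤ a - 1 by omega),
            Nat.add_zero] at hup
          exact hup.2

end Transfers4

/-- If pipe `j` is removable in `P ∈ MRPD(w)` and pipe `j' ≠ j` is
non-removable in `P`, then pipe `j'` is also non-removable in `Φ_j(P)`. -/
theorem nonremovable_after_phiOp (n : ℕ) (w : Equiv.Perm (Fin n)) (P : PD)
    (hword : P.word = permWord w) (hP : isMRPD P) (j : ℕ) (hj : Removable P j)
    (j' : ℕ) (hj' : j' ∈ P.word) (hne : j' ≠ j) (hnr : ¬ Removable P j') :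
    ¬ Removable (PhiOp P j) j' := by
  intro hQrem
  apply hnr
  obtain ⟨hnd, hposw, hCsub, hCsum, hMsub, hMCd, hexit, hred, hmark⟩ := hP
  have hlen : P.word.length = n := by rw [hword]; exact permWord_length w
  have hjmem := hj.1
  have hjr : 1 ≤ j ∧ j ≤ n := by rwa [hword, permWord_mem_iff] at hjmem
  have hjr' : 1 ≤ j' ∧ j' ≤ n := by
    have := hj'
    rwa [hword, permWord_mem_iff] at this
  have wcj : wordCol P.word j = j := by
    rw [hword]; exact wordCol_permWord w (by omega) (by omega)
  have wcj' : wordCol P.word j' = j' := by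
    rw [hword]; exact wordCol_permWord w (by omega) (by omega)
  have hC1 : ∀ t ∈ P.C, 1 ≤ t.1 := by
    intro t ht
    have := hCsub ht
    rw [hlen, staircase_mem_iff] at this
    exact this.1
  have hC2 : ∀ t ∈ P.C, 1 ≤ t.2 := by
    intro t ht
    have := hCsub ht
    rw [hlen, staircase_mem_iff] at this
    exact this.2.1
  have hCs : ∀ t ∈ P.C, t.1 + t.2 ≤ n := by
    intro t ht
    have := hCsum t ht
    omega
  have hMf : ∀ t ∈ P.M, 1 ≤ t.1 ∧ 1 ≤ t.2 ∧ t.1 + t.2 ≤ n + 1 := by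
    intro t ht
    have := hMsub ht
    rwa [hlen, staircase_mem_iff] at this
  obtain ⟨-, hjB, hjCm, hjD, hjE⟩ := hj
  rw [wcj] at hjB hjCm hjD hjE
  have hctx : Ctx n P.C P.M j :=
    ⟨hC1, hC2, hCs, hMf, hMCd, hjr.1, hjr.2, hjB, hjCm, hjD, hjE⟩
  have hwcQ : wordCol (PhiOp P j).word j' = j' - (if j < j' then 1 else 0) := by
    show wordCol (P.word.erase j) j' = _
    rw [hword]
    exact wordCol_erase_permWord w (by omega) (by omega) (by omega) (by omega)
  have hQCeq : (PhiOp P j).C = QC n P.C j := by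
    show fselect _ _ = _
    unfold QC
    simp only [wcj, hlen]
  have hQMeq : (PhiOp P j).M = QM n P.C P.M j := by
    show fselect _ _ = _
    unfold QM
    simp only [wcj, hlen]
  obtain ⟨-, hQB, hQCm, hQD, hQE⟩ := hQrem
  rw [hwcQ, hQCeq] at hQB
  rw [hwcQ, hQMeq] at hQCm
  rw [hwcQ, hQCeq, hQMeq] at hQD
  rw [hwcQ, hQCeq, hQMeq] at hQE
  refine ⟨hj', ?_, ?_, ?_, ?_⟩
  · rw [wcj']
    intro i hmem
    exact Or.inl (transferB hctx (by omega) (by omega) (by omega) hQB hQCm i hmem)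
  · rw [wcj']
    exact fun i => transferC hctx (by omega) (by omega) (by omega) hQCm i
  · rw [wcj']
    exact transferD hctx (by omega) (by omega) (by omega) hQD
  · rw [wcj']
    exact transferE hctx (by omega) (by omega) (by omega) hQE

end GrothPS
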